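/- arXiv:2308.01258 — 9 statements merged into one kernel-verified Lean document; each statement's English description precedes it below -/
import Mathlib

section
/- Let q = p^r with p an odd prime and n ≥ 1. The polynomial x_1^{q-1} ⋯ x_{n-1}^{q-1} x_n^{q-2} + x_n^{q-2} ∈ F_q[x_1,…,x_n] is a permutation polynomial of total degree n(q-1) − 1. -/
open MvPolynomial

private lemma pow_card_sub_two_eq_inv {F : Type*} [Field F] [Fintype F]
    (h3 : 3 ≤ Fintype.card F) (t : F) : t ^ (Fintype.card F - 2) = t⁻¹ := by
  rcases eq_or_ne t 0 with rfl | ht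
  · rw [zero_pow (by omega), inv_zero]
  · have h1 : t ^ (Fintype.card F - 1) = 1 := FiniteField.pow_card_sub_one_eq_one t ht
    field_simp
    rw [← pow_succ]
    convert h1 using 2
    omega


/-- For odd `p`, the polynomial `x_1^{q-1} ⋯ x_{n-1}^{q-1}·x_n^{q-2} + x_n^{q-2}`
is a permutation polynomial of total degree `n(q-1) - 1`.  Here `n = m + 1 ≥ 1`. -/
theorem pp_max_degree_odd_char {p r m : ℕ} (hp : p.Prime) (hodd : p ≠ 2) (hr : 0 < r)
    {F : Type*} [Field F] [Fintype F] [DecidableEq F]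
    (hF : Fintype.card F = p ^ r)
    (h : MvPolynomial (Fin (m + 1)) F)
    (hdef : h = (∏ i : Fin m,
        (X i.castSucc : MvPolynomial (Fin (m + 1)) F) ^ (Fintype.card F - 1)) *
        (X (Fin.last m)) ^ (Fintype.card F - 2)
        + (X (Fin.last m)) ^ (Fintype.card F - 2)) :
    (∀ a : F,
      (Finset.univ.filter (fun x : Fin (m + 1) → F => eval x h = a)).card
        = Fintype.card F ^ m) ∧
    h.totalDegree = (m + 1) * (Fintype.card F - 1) - 1 := by
  set q := Fintype.card F with hq
  have hq3 : 3 ≤ q := by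
    have h1 : p ≤ p ^ r := Nat.le_self_pow hr.ne' p
    have h2 : 2 ≤ p := hp.two_le
    have h3 : 3 ≤ p := by omega
    omega
  -- `p = 0` in `F`
  have hpF : (p : F) = 0 := by
    have hc : ((q : ℕ) : F) = 0 := Nat.cast_card_eq_zero F
    rw [hF] at hc
    push_cast at hc
    exact pow_eq_zero_iff hr.ne' |>.mp hc
  -- `2 ≠ 0` in `F`
  have h2F : (2 : F) ≠ 0 := by
    intro h2
    obtain ⟨k, hk⟩ := hp.odd_of_ne_two hodd
    have hcast : (p : F) = 2 * (k : F) + 1 := by rw [hk]; push_cast; ring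
    rw [hpF, h2] at hcast
    simp at hcast
  have hinv : ∀ t : F, t ^ (q - 2) = t⁻¹ := pow_card_sub_two_eq_inv hq3
  -- the product of (q-1)-th powers is 0 or 1
  have hprod : ∀ y : Fin m → F,
      (∏ i : Fin m, (y i) ^ (q - 1)) = 0 ∨ (∏ i : Fin m, (y i) ^ (q - 1)) = 1 := by
    intro y
    refine Finset.prod_induction _ (fun z => z = 0 ∨ z = 1) ?_ (Or.inr rfl) ?_
    · rintro a b (rfl | rfl) (rfl | rfl) <;> simp
    · intro i _
      rcases eq_or_ne (y i) 0 with h0 | h0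
      · exact Or.inl (by rw [h0, zero_pow (by omega)])
      · exact Or.inr (FiniteField.pow_card_sub_one_eq_one _ h0)
  have hc : ∀ y : Fin m → F, (∏ i : Fin m, (y i) ^ (q - 1)) + 1 ≠ 0 := by
    intro y
    rcases hprod y with h0 | h1
    · rw [h0, zero_add]; exact one_ne_zero
    · rw [h1, one_add_one_eq_two]; exact h2F
  have heval : ∀ x : Fin (m + 1) → F,
      eval x h = ((∏ i : Fin m, (x i.castSucc) ^ (q - 1)) + 1) * (x (Fin.last m))⁻¹ := by
    intro x
    rw [hdef]
    simp only [map_add, map_mul, map_prod, map_pow, eval_X, hinv]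
    ring
  constructor
  · -- permutation property
    intro a
    have hcard : (Finset.univ.filter (fun x : Fin (m + 1) → F => eval x h = a)).card
        = (Finset.univ : Finset (Fin m → F)).card := by
      refine Finset.card_bij' (fun x _ => fun i => x i.castSucc)
        (fun y _ => Fin.snoc y ((a * ((∏ i : Fin m, (y i) ^ (q - 1)) + 1)⁻¹)⁻¹))
        (fun x hx => Finset.mem_univ _) ?_ ?_ ?_
      · -- the inverse map lands in the filter
        intro y _
        rw [Finset.mem_filter]
        refine ⟨Finset.mem_univ _, ?_⟩
        rw [heval]
        simp only [Fin.snoc_castSucc, Fin.snoc_last, inv_inv]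
        have := hc y
        field_simp
      · -- left inverse
        intro x hx
        rw [Finset.mem_filter] at hx
        have ha : ((∏ i : Fin m, (x i.castSucc) ^ (q - 1)) + 1) * (x (Fin.last m))⁻¹ = a := by
          rw [← heval]; exact hx.2
        have hlast : (a * ((∏ i : Fin m, (x i.castSucc) ^ (q - 1)) + 1)⁻¹)⁻¹
            = x (Fin.last m) := by
          rw [← ha, mul_right_comm, mul_inv_cancel₀ (hc _), one_mul, inv_inv]
        dsimp only
        rw [hlast]
        exact Fin.snoc_init_self x
      · -- right inverse
        intro y _
        funext i
        simp [Fin.snoc_castSucc]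
    rw [hcard, Finset.card_univ, Fintype.card_fun, Fintype.card_fin]
  · -- total degree
    set sA : Fin (m + 1) →₀ ℕ :=
      (∑ i : Fin m, Finsupp.single (i.castSucc : Fin (m + 1)) (q - 1))
        + Finsupp.single (Fin.last m) (q - 2) with hsA
    set sB : Fin (m + 1) →₀ ℕ := Finsupp.single (Fin.last m) (q - 2) with hsB
    have hXprod : (∏ i : Fin m, (X i.castSucc : MvPolynomial (Fin (m + 1)) F) ^ (q - 1))
        = monomial (∑ i : Fin m, Finsupp.single (i.castSucc : Fin (m + 1)) (q - 1)) 1 := by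
      rw [monomial_sum_one]
      refine Finset.prod_congr rfl fun i _ => by rw [X_pow_eq_monomial]
    have hh : h = monomial sA 1 + monomial sB 1 := by
      rw [hdef, hXprod, hsB, X_pow_eq_monomial, monomial_mul, one_mul, hsA]
    have hsum : sA.sum (fun _ e => e) = m * (q - 1) + (q - 2) := by
      have h1 : ∀ x : Fin m,
          (Finsupp.single (Fin.castSucc x : Fin (m + 1)) (q - 1)).sum (fun _ e => e) = q - 1 :=
        fun x => Finsupp.sum_single_index rfl
      rw [hsA, Finsupp.sum_add_index' (fun _ => rfl) (fun _ _ _ => rfl),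
        ← Finsupp.sum_finset_sum_index (fun _ => rfl) (fun _ _ _ => rfl), hsB,
        Finsupp.sum_single_index rfl, Finset.sum_congr rfl fun x _ => h1 x,
        Finset.sum_const, Finset.card_univ, Fintype.card_fin, smul_eq_mul]
    have hdegA : (monomial sA (1 : F)).totalDegree = m * (q - 1) + (q - 2) := by
      rw [totalDegree_monomial _ one_ne_zero, hsum]
    have hdegB : (monomial sB (1 : F)).totalDegree = q - 2 := by
      rw [totalDegree_monomial _ one_ne_zero, hsB, Finsupp.sum_single_index rfl]
    have hub : h.totalDegree ≤ m * (q - 1) + (q - 2) := by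
      rw [hh]
      refine (totalDegree_add _ _).trans ?_
      rw [hdegA, hdegB]
      exact max_le le_rfl (by omega)
    have hne : coeff sA h ≠ 0 := by
      rw [hh, coeff_add, coeff_monomial, if_pos rfl, coeff_monomial]
      split_ifs
      · rw [one_add_one_eq_two]; exact h2F
      · rw [add_zero]; exact one_ne_zero
    have hlb : m * (q - 1) + (q - 2) ≤ h.totalDegree := by
      rw [← hsum]
      exact le_totalDegree (mem_support_iff.mpr hne)
    have hdeg : h.totalDegree = m * (q - 1) + (q - 2) := le_antisymm hub hlb
    rw [hdeg, add_mul, one_mul]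
    omega
end

section
/- For every n ≥ 1, the polynomial α_n(x_1,…,x_n) = ∑ x_1^{i_1} x_2^{i_2} ⋯ x_n^{i_n} + x_1 ∈ F_4[x_1,…,x_n], where the sum ranges over all exponent tuples with 0 ≤ i_j ≤ 3 for each j and i_1 + ⋯ + i_n ≤ 3n − 1, is a permutation polynomial of F_4[x_1,…,x_n] of total degree 3n − 1. -/
open MvPolynomial Finset

/-!
In characteristic 2 we have `1 + y + y² + y³ = (1 + y)³`, so the sum of all monomials with
exponents at most 3 factors as `∏ (1 + x_j)³`, and removing the only monomial of degree `3n`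
gives `α_n = (∏ (1 + x_j))³ - (∏ x_j)³ + x_1`. Over `F_4` every cube is `0` or `1`, hence
`α_n(x) ∈ {x_1, x_1 + 1}`; and translating `x` by `(1, …, 1)` swaps the two products, hence
`α_n(x + 1) = α_n(x) + 1`. The second fact makes the fibres over `a` and `a + 1` equinumerous,
the first makes their union the set `{x_1 ∈ {a, a + 1}}` of size `2 · 4^(n-1)`.
The degree is attained by the monomial `x_1² x_2³ ⋯ x_n³`.
-/

theorem FiniteField.pow_card_sub_one_eq_zero_or_one {K : Type*} [Field K] [Fintype K] (x : K) :
    x ^ (Fintype.card K - 1) = 0 ∨ x ^ (Fintype.card K - 1) = 1 := by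
  by_cases hx : x = 0
  · have := Fintype.one_lt_card (α := K)
    exact Or.inl (by simp [hx]; omega)
  · exact Or.inr (pow_card_sub_one_eq_one x hx)

theorem Fintype.card_filter_apply_eq {K ι : Type*} [Fintype K] [DecidableEq K] [Fintype ι]
    [DecidableEq ι] (i : ι) (a : K) :
    #{x : ι → K | x i = a} = Fintype.card K ^ (Fintype.card ι - 1) := by
  simpa using card_filter_piFinset_const (univ : Finset K) i a

theorem filter_sum_le_mul_sub_one_eq_erase {k n : ℕ} (hkn : 0 < k * n) :
    ({e : Fin n → Fin (k + 1) | ∑ j, (e j : ℕ) ≤ k * n - 1} : Finset _) =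
      univ.erase fun _ => Fin.last k := by
  rw [← filter_ne']
  refine filter_congr fun e _ => ?_
  have hle (j : Fin n) : (e j : ℕ) ≤ k := Fin.is_le (e j)
  constructor
  · rintro h rfl
    simp only [Fin.val_last, sum_const, card_univ, Fintype.card_fin, smul_eq_mul, mul_comm] at h
    omega
  · intro hne
    obtain ⟨j, hj⟩ := Function.ne_iff.mp hne
    have : ∑ j, (e j : ℕ) < ∑ _j : Fin n, k :=
      sum_lt_sum (fun j _ => hle j) ⟨j, mem_univ j, lt_of_le_of_ne (hle j) (Fin.val_ne_of_ne hj)⟩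
    simp only [sum_const, card_univ, Fintype.card_fin, smul_eq_mul, mul_comm] at this
    omega

theorem sup_filter_sum_le_mul_sub_one {k n : ℕ} (hn : 0 < n) :
    ({e : Fin n → Fin (k + 1) | ∑ j, (e j : ℕ) ≤ k * n - 1} : Finset _).sup
      (fun e => ∑ j, (e j : ℕ)) = k * n - 1 := by
  obtain ⟨m, rfl⟩ : ∃ m, n = m + 1 := ⟨n - 1, by omega⟩
  obtain ⟨e₀, he₀⟩ : ∃ e₀ : Fin (m + 1) → Fin (k + 1), ∑ j, (e₀ j : ℕ) = k * (m + 1) - 1 := by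
    refine ⟨Fin.cons ⟨k - 1, by omega⟩ fun _ => Fin.last k, ?_⟩
    simp only [Fin.sum_univ_succ, Fin.cons_zero, Fin.cons_succ, Fin.val_last, sum_const, card_univ,
      Fintype.card_fin, smul_eq_mul, mul_comm m, mul_add, mul_one]
    rcases Nat.eq_zero_or_pos k with rfl | hk
    · simp
    · omega
  refine le_antisymm (Finset.sup_le fun e he => (mem_filter.mp he).2) ?_
  calc k * (m + 1) - 1 = ∑ j, (e₀ j : ℕ) := he₀.symm
    _ ≤ _ := le_sup (f := fun e : Fin (m + 1) → Fin (k + 1) => ∑ j, (e j : ℕ))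
      (mem_filter.mpr ⟨mem_univ e₀, he₀.le⟩)

theorem sum_filter_sum_le_prod_pow {R : Type*} [CommRing R] {k n : ℕ} (hkn : 0 < k * n)
    (a : Fin n → R) :
    ∑ e ∈ {e : Fin n → Fin (k + 1) | ∑ j, (e j : ℕ) ≤ k * n - 1}, ∏ j, a j ^ (e j : ℕ) =
      ∑ e : Fin n → Fin (k + 1), ∏ j, a j ^ (e j : ℕ) - ∏ j, a j ^ k := by
  rw [filter_sum_le_mul_sub_one_eq_erase hkn, sum_erase_eq_sub (mem_univ _)]
  simp only [Fin.val_last]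

theorem card_filter_eq_of_map_add_one {K ι : Type*} [Field K] [Fintype K] [DecidableEq K]
    [CharP K 2] [Fintype ι] [DecidableEq ι] (f : (ι → K) → K) (i : ι)
    (hf : ∀ x, f x = x i ∨ f x = x i + 1) (hf_add_one : ∀ x, f (x + 1) = f x + 1) (a : K) :
    #{x | f x = a} = Fintype.card K ^ (Fintype.card ι - 1) := by
  have hne : a ≠ a + 1 := by simp
  have hdisj (g : (ι → K) → K) :
      Disjoint (univ.filter fun x => g x = a) (univ.filter fun x => g x = a + 1) :=
    disjoint_filter.mpr fun _ _ ha ha' => hne (ha ▸ ha')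
  have hpair : #{x | f x = a} + #{x | f x = a + 1} =
      #{x : ι → K | x i = a} + #{x : ι → K | x i = a + 1} := by
    rw [← card_union_of_disjoint (hdisj f), ← card_union_of_disjoint (hdisj (· i)),
      ← filter_or, ← filter_or]
    congr 1
    ext x
    rcases hf x with h | h <;>
      simp [h, CharTwo.add_eq_iff_eq_add, CharTwo.add_cancel_right, or_comm]
  have hshift : #{x | f x = a + 1} = #{x | f x = a} :=
    (card_equiv (Equiv.addRight 1) fun x => by simp [hf_add_one]).symm
  rw [hshift, Fintype.card_filter_apply_eq, Fintype.card_filter_apply_eq] at hpair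
  omega

namespace CharTwo

variable {R : Type*} [CommRing R] [CharP R 2]

theorem one_add_pow_three (a : R) : (1 + a) ^ 3 = 1 + a + a ^ 2 + a ^ 3 := by
  linear_combination (a + a ^ 2) * two_eq_zero (R := R)

theorem sum_prod_pow_fin_four {σ : Type*} [Fintype σ] [DecidableEq σ] (a : σ → R) :
    ∑ e : σ → Fin 4, ∏ j, a j ^ (e j : ℕ) = ∏ j, (1 + a j) ^ 3 := by
  rw [← Fintype.prod_sum fun j (i : Fin 4) => a j ^ (i : ℕ)]
  exact Fintype.prod_congr _ _ fun j => by simp [Fin.sum_univ_four, one_add_pow_three, add_assoc]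

theorem sum_filter_sum_le_three_mul_sub_one_prod_pow {n : ℕ} (hn : 0 < n)
    (a : Fin n → R) :
    ∑ e ∈ {e : Fin n → Fin 4 | ∑ j, (e j : ℕ) ≤ 3 * n - 1}, ∏ j, a j ^ (e j : ℕ) =
      (∏ j, (1 + a j)) ^ 3 - (∏ j, a j) ^ 3 := by
  rw [sum_filter_sum_le_prod_pow (k := 3) (by omega), sum_prod_pow_fin_four, prod_pow, prod_pow]

theorem prod_one_add_pow_three_sub_prod_pow_three_add_one {ι : Type*} [Fintype ι]
    (x : ι → R) :
    (∏ j, (1 + (x + 1) j)) ^ 3 - (∏ j, (x + 1) j) ^ 3 =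
      (∏ j, (1 + x j)) ^ 3 - (∏ j, x j) ^ 3 := by
  have h₁ : ∏ j, (1 + (x + 1) j) = ∏ j, x j :=
    prod_congr rfl fun j _ => by simp [add_comm (1 : R), CharTwo.add_cancel_right]
  have h₂ : ∏ j, (x + 1) j = ∏ j, (1 + x j) := prod_congr rfl fun j _ => add_comm _ _
  rw [h₁, h₂]
  linear_combination ((∏ j, x j) ^ 3 - (∏ j, (1 + x j)) ^ 3) * two_eq_zero (R := R)

end CharTwo

theorem FiniteField.pow_three_sub_pow_three_eq_zero_or_one {F : Type*} [Field F] [Fintype F]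
    [CharP F 2] (hF : Fintype.card F = 4) (a b : F) : a ^ 3 - b ^ 3 = 0 ∨ a ^ 3 - b ^ 3 = 1 := by
  have hcube (y : F) : y ^ 3 = 0 ∨ y ^ 3 = 1 := by
    simpa [hF] using pow_card_sub_one_eq_zero_or_one y
  rcases hcube a with ha | ha <;> rcases hcube b with hb | hb <;> simp [ha, hb, CharTwo.neg_eq]

namespace MvPolynomial

variable {R σ : Type*} [CommSemiring R]

theorem support_sum_monomial_one [Nontrivial R] (S : Finset (σ →₀ ℕ)) :
    (∑ s ∈ S, monomial s (1 : R)).support = S := by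
  classical
  ext t
  simp [mem_support_iff, coeff_sum, coeff_monomial]

theorem prod_X_pow_eq_monomial_equivFunOnFinite_symm [Fintype σ] (f : σ → ℕ) :
    ∏ j, (X j : MvPolynomial σ R) ^ f j = monomial (Finsupp.equivFunOnFinite.symm f) 1 := by
  rw [monomial_eq, C_1, one_mul, Finsupp.prod_fintype _ _ fun _ => pow_zero _]
  simp

theorem totalDegree_sum_prod_X_pow [Nontrivial R] [Fintype σ] {ι : Type*} (S : Finset ι)
    {f : ι → σ → ℕ} (hf : Function.Injective f) :
    (∑ i ∈ S, ∏ j, (X j : MvPolynomial σ R) ^ f i j).totalDegree = S.sup fun i => ∑ j, f i j := by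
  let φ : ι ↪ (σ →₀ ℕ) := ⟨fun i => Finsupp.equivFunOnFinite.symm (f i),
    Finsupp.equivFunOnFinite.symm.injective.comp hf⟩
  have hsum : ∑ i ∈ S, ∏ j, (X j : MvPolynomial σ R) ^ f i j = ∑ s ∈ S.map φ, monomial s 1 := by
    simp [φ, prod_X_pow_eq_monomial_equivFunOnFinite_symm]
  rw [hsum, totalDegree, support_sum_monomial_one, sup_map]
  congr 1
  ext i
  simp [φ, Finsupp.sum_fintype]

theorem totalDegree_sum_filter_sum_le_prod_X_pow [Nontrivial R] {k n : ℕ} (hn : 0 < n) :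
    (∑ e ∈ {e : Fin n → Fin (k + 1) | ∑ j, (e j : ℕ) ≤ k * n - 1},
      ∏ j, (X j : MvPolynomial (Fin n) R) ^ (e j : ℕ)).totalDegree = k * n - 1 := by
  have hval : Function.Injective fun (e : Fin n → Fin (k + 1)) j => (e j : ℕ) :=
    Fin.val_injective.comp_left
  rw [totalDegree_sum_prod_X_pow _ hval]
  exact sup_filter_sum_le_mul_sub_one hn

end MvPolynomial

/-- Over `F_4`, the polynomial `α_n = ∑ x_1^{i_1} ⋯ x_n^{i_n} + x_1`, summed over all
exponent tuples with `0 ≤ i_j ≤ 3` and `i_1 + ⋯ + i_n ≤ 3n - 1`, is a permutation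
polynomial of total degree `3n - 1`. -/
theorem pp_F4_all_monomials {F : Type*} [Field F] [Fintype F] [DecidableEq F]
    (hF : Fintype.card F = 4) {n : ℕ} (hn : 0 < n)
    (α : MvPolynomial (Fin n) F)
    (hα : α = (∑ e ∈ Finset.univ.filter
        (fun e : Fin n → Fin 4 => ∑ j, (e j : ℕ) ≤ 3 * n - 1),
        ∏ j, X j ^ (e j : ℕ)) + X (⟨0, hn⟩ : Fin n)) :
    (∀ a : F,
      (Finset.univ.filter (fun x : Fin n → F => eval x α = a)).card = 4 ^ (n - 1)) ∧
    α.totalDegree = 3 * n - 1 := by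
  have : CharP F 2 := ringChar.of_eq (FiniteField.even_card_iff_char_two.mpr (by rw [hF]))
  have heval (x : Fin n → F) :
      eval x α = (∏ j, (1 + x j)) ^ 3 - (∏ j, x j) ^ 3 + x ⟨0, hn⟩ := by
    simp [hα, CharTwo.sum_filter_sum_le_three_mul_sub_one_prod_pow hn]
  refine ⟨fun a => ?_, ?_⟩
  · rw [card_filter_eq_of_map_add_one (eval · α) ⟨0, hn⟩ ?_ ?_ a, hF, Fintype.card_fin]
    · intro x
      rcases FiniteField.pow_three_sub_pow_three_eq_zero_or_one hF (∏ j, (1 + x j)) (∏ j, x j)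
        with h | h <;> simp only [heval, h] <;> simp [add_comm]
    · intro x
      rw [heval, heval, CharTwo.prod_one_add_pow_three_sub_prod_pow_three_add_one, Pi.add_apply,
        Pi.one_apply, add_assoc]
  · rw [hα, totalDegree_add_eq_left_of_totalDegree_lt] <;>
      rw [totalDegree_sum_filter_sum_le_prod_X_pow (k := 3) hn]
    rw [totalDegree_X]
    omega
end

section
/- Let q = 2^r with r even (so that 3 divides q − 1), let a ∈ F_q be an element that is not a cube in F_q, let f ∈ F_q[y] be a (univariate) permutation polynomial of F_q, and let g ∈ F_q[x_1,…,x_n] be any polynomial. Then h(x_1,…,x_n,y) = (g(x_1,…,x_n)^3 − a) · f(y) is a permutation polynomial in F_q[x_1,…,x_n,y], i.e., for each c ∈ F_q the equation h = c has exactly q^n solutions in F_q^{n+1}. -/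
open MvPolynomial

/-- For `q = 2^r` with `r` even, `a` a non-cube, `f` a univariate permutation polynomial
and `g` any polynomial in `n` variables, `h(x,y) = (g(x)^3 - a)·f(y)` is a permutation
polynomial in `n + 1` variables: every equation `h = c` has exactly `q^n` solutions. -/
theorem pp_cube_nonresidue_times_pp {r : ℕ} (hr : Even r)
    {F : Type*} [Field F] [Fintype F] [DecidableEq F]
    (hF : Fintype.card F = 2 ^ r)
    (a : F) (ha : ¬ ∃ b : F, b ^ 3 = a)
    (f : Polynomial F) (hf : Function.Bijective fun y : F => Polynomial.eval y f)
    {n : ℕ} (g : MvPolynomial (Fin n) F) :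
    ∀ c : F,
      (Finset.univ.filter (fun xy : (Fin n → F) × F =>
        (eval xy.1 g ^ 3 - a) * Polynomial.eval xy.2 f = c)).card
        = Fintype.card F ^ n := by
  intro c
  have ha0 : ∀ x : Fin n → F, eval x g ^ 3 - a ≠ 0 := by
    intro x h
    exact ha ⟨eval x g, sub_eq_zero.mp h⟩
  -- for each x there is a unique y
  have key : ∀ x : Fin n → F, ∃! y : F,
      (eval x g ^ 3 - a) * Polynomial.eval y f = c := by
    intro x
    have htne := ha0 x
    obtain ⟨y, hy⟩ := hf.2 (c / (eval x g ^ 3 - a))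
    simp only at hy
    refine ⟨y, ?_, ?_⟩
    · show (eval x g ^ 3 - a) * Polynomial.eval y f = c
      rw [hy]; field_simp
    · intro z hz
      apply hf.1
      show Polynomial.eval z f = Polynomial.eval y f
      rw [hy, eq_div_iff htne, mul_comm]
      exact hz
  choose Y hY hYu using key
  have himg : (Finset.univ.filter (fun xy : (Fin n → F) × F =>
      (eval xy.1 g ^ 3 - a) * Polynomial.eval xy.2 f = c))
      = (Finset.univ : Finset (Fin n → F)).image (fun x => (x, Y x)) := by
    ext p
    simp only [Finset.mem_filter, Finset.mem_univ, true_and, Finset.mem_image]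
    constructor
    · intro hp
      exact ⟨p.1, by rw [← hYu p.1 p.2 hp]⟩
    · rintro ⟨x, rfl⟩
      exact hY x
  rw [himg, Finset.card_image_of_injective _ (fun x y hxy => (Prod.mk.injEq _ _ _ _ ▸ hxy : _ ∧ _).1)]
  simp [Finset.card_univ]
end

section
/- Let q = 2^r with r > 1, let α ∈ F_q with α ≠ 0 and α ≠ 1, and let f ∈ F_q[y] be a (univariate) permutation polynomial of F_q of degree q − 2. Then h(x_1,…,x_n,y) = (x_1^{q-1} ⋯ x_n^{q-1} + α) · f(y) is a permutation polynomial in F_q[x_1,…,x_n,y] of total degree n(q-1) + q − 2 (the maximum possible degree of a PP in n+1 variables). -/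
open MvPolynomial

theorem pp_aux_sum {σ F : Type*} [Field F] (f : Polynomial F) (j : σ) :
    (Polynomial.aeval (X j : MvPolynomial σ F) f)
      = f.sum fun k a => monomial (Finsupp.single j k) a := by
  rw [Polynomial.aeval_def, Polynomial.eval₂_eq_sum]
  congr 1; ext k a
  rw [X_pow_eq_monomial, algebraMap_eq, C_mul_monomial, mul_one]

theorem pp_aux_coeff {σ F : Type*} [DecidableEq σ] [Field F] (f : Polynomial F) (j : σ) (k : ℕ) :
    coeff (Finsupp.single j k) (Polynomial.aeval (X j : MvPolynomial σ F) f)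
      = f.coeff k := by
  rw [pp_aux_sum, Polynomial.sum_def, coeff_sum]
  rw [Finset.sum_eq_single k]
  · simp [coeff_monomial]
  · intro b hb hbk
    rw [coeff_monomial, if_neg]
    rw [Finsupp.single_eq_single_iff]
    rintro (⟨-, h⟩ | ⟨h0, hk0⟩) <;> exact hbk (by omega)
  · intro hk; simp [Polynomial.notMem_support_iff.mp hk]

theorem pp_aux_tdeg {σ F : Type*} [Field F] (f : Polynomial F) (j : σ) :
    (Polynomial.aeval (X j : MvPolynomial σ F) f).totalDegree ≤ f.natDegree := by
  rw [pp_aux_sum, Polynomial.sum_def]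
  refine (totalDegree_finset_sum _ _).trans ?_
  apply Finset.sup_le
  intro k hk
  refine (totalDegree_monomial_le _ _).trans ?_
  simpa using Polynomial.le_natDegree_of_mem_supp k hk

theorem pp_aux_eval {σ F : Type*} [Field F] (f : Polynomial F) (j : σ) (x : σ → F) :
    eval x (Polynomial.aeval (X j : MvPolynomial σ F) f) = f.eval (x j) := by
  simp [Polynomial.aeval_def, Polynomial.eval₂_eq_sum, Polynomial.eval_eq_sum,
    Polynomial.sum, map_sum]

def ppSumValsHom (σ : Type*) : (σ →₀ ℕ) →+ ℕ where
  toFun m := m.sum fun _ e => e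
  map_zero' := rfl
  map_add' _ _ := Finsupp.sum_add_index' (h := fun _ e => e) (fun _ => rfl) (fun _ _ _ => rfl)

/-- For `q = 2^r` with `r > 1`, `α ≠ 0, 1` and `f` a univariate permutation polynomial of
degree `q - 2`, the polynomial `h(x,y) = (x_1^{q-1} ⋯ x_n^{q-1} + α)·f(y)` is a
permutation polynomial in `n + 1` variables of total degree `n(q-1) + q - 2`. -/
theorem pp_max_degree_char2 {r n : ℕ} (hr : 1 < r)
    {F : Type*} [Field F] [Fintype F] [DecidableEq F]
    (hF : Fintype.card F = 2 ^ r)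
    (α : F) (hα0 : α ≠ 0) (hα1 : α ≠ 1)
    (f : Polynomial F) (hf : Function.Bijective fun y : F => Polynomial.eval y f)
    (hfdeg : f.natDegree = Fintype.card F - 2)
    (h : MvPolynomial (Fin (n + 1)) F)
    (hdef : h = ((∏ i : Fin n,
        (X i.castSucc : MvPolynomial (Fin (n + 1)) F) ^ (Fintype.card F - 1)) + C α) *
        Polynomial.aeval (X (Fin.last n) : MvPolynomial (Fin (n + 1)) F) f) :
    (∀ c : F,
      (Finset.univ.filter (fun x : Fin (n + 1) → F => eval x h = c)).card
        = Fintype.card F ^ n) ∧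
    h.totalDegree = n * (Fintype.card F - 1) + (Fintype.card F - 2) := by
  classical
  set q := Fintype.card F with hq
  have hq4 : 4 ≤ q := by
    rw [hF]
    calc (4 : ℕ) = 2 ^ 2 := rfl
    _ ≤ 2 ^ r := Nat.pow_le_pow_right (by norm_num) hr
  -- characteristic 2
  have h2 : (2 : F) = 0 := by
    have hc : ((q : ℕ) : F) = 0 := FiniteField.cast_card_eq_zero F
    rw [hF] at hc
    push_cast at hc
    exact pow_eq_zero_iff (by omega) |>.mp hc
  have h1α : (1 : F) + α ≠ 0 := by
    intro hcon
    exact hα1 (by linear_combination hcon - h2)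
  have hf0 : f ≠ 0 := by
    rintro rfl
    exact one_ne_zero (hf.1 (a₁ := (1 : F)) (a₂ := 0) (by simp))
  have hlc : f.coeff (q - 2) ≠ 0 := by
    rw [← hfdeg]
    exact Polynomial.leadingCoeff_ne_zero.mpr hf0
  have heval : ∀ x : Fin (n + 1) → F,
      eval x h = ((∏ i : Fin n, x i.castSucc ^ (q - 1)) + α) * f.eval (x (Fin.last n)) := by
    intro x
    rw [hdef, map_mul, map_add, map_prod, pp_aux_eval, eval_C]
    simp
  have hcne : ∀ v : Fin n → F, (∏ i : Fin n, v i ^ (q - 1)) + α ≠ 0 := by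
    intro v
    by_cases hv : ∀ i, v i ≠ 0
    · have hone : ∀ i ∈ Finset.univ, v i ^ (q - 1) = 1 := fun i _ =>
        FiniteField.pow_card_sub_one_eq_one (v i) (hv i)
      rw [Finset.prod_congr rfl hone, Finset.prod_const_one]
      exact h1α
    · push_neg at hv
      obtain ⟨i, hi⟩ := hv
      rw [Finset.prod_eq_zero (Finset.mem_univ i) (by rw [hi]; exact zero_pow (by omega))]
      simpa using hα0
  constructor
  · -- counting
    intro c
    set e : F ≃ F := Equiv.ofBijective _ hf with he
    have hee : ∀ y, e y = f.eval y := fun y => rfl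
    have key : (Finset.univ.filter (fun x : Fin (n + 1) → F => eval x h = c)).card
        = (Finset.univ : Finset (Fin n → F)).card := by
      refine Finset.card_bij'
        (fun x _ => fun i : Fin n => x i.castSucc)
        (fun v _ => Fin.snoc v (e.symm (c / ((∏ i : Fin n, v i ^ (q - 1)) + α))))
        (fun x hx => Finset.mem_univ _) ?_ ?_ ?_
      · -- j maps into the filter
        intro v _
        rw [Finset.mem_filter]
        refine ⟨Finset.mem_univ _, ?_⟩
        rw [heval]
        simp only [Fin.snoc_castSucc, Fin.snoc_last]
        rw [← hee, Equiv.apply_symm_apply]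
        exact mul_div_cancel₀ _ (hcne v)
      · -- left inverse
        intro x hx
        rw [Finset.mem_filter] at hx
        have hx2 := hx.2
        rw [heval] at hx2
        have hne := hcne (fun i : Fin n => x i.castSucc)
        have hy : f.eval (x (Fin.last n))
            = c / ((∏ i : Fin n, x i.castSucc ^ (q - 1)) + α) := by
          rw [eq_div_iff hne, mul_comm]
          exact hx2
        funext i
        refine Fin.lastCases ?_ (fun j => ?_) i
        · simp only [Fin.snoc_last]
          rw [← hy, ← hee, Equiv.symm_apply_apply]
        · simp only [Fin.snoc_castSucc]
      · intro v _
        funext i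
        simp only [Fin.snoc_castSucc]
    rw [key]
    simp [hq]
  · -- total degree
    set p : MvPolynomial (Fin (n + 1)) F :=
      Polynomial.aeval (X (Fin.last n) : MvPolynomial (Fin (n + 1)) F) f with hp
    set s : Fin (n + 1) →₀ ℕ :=
      ∑ i : Fin n, Finsupp.single (i.castSucc) (q - 1) with hs
    have hg : (∏ i : Fin n,
        (X i.castSucc : MvPolynomial (Fin (n + 1)) F) ^ (q - 1)) = monomial s 1 := by
      rw [hs, monomial_sum_one]
      exact Finset.prod_congr rfl fun i _ => X_pow_eq_monomial
    have hsv : ∀ m : Fin (n + 1) →₀ ℕ, (m.sum fun _ e => e) = ppSumValsHom (Fin (n + 1)) m :=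
      fun _ => rfl
    have hssum : s.sum (fun _ e => e) = n * (q - 1) := by
      rw [hsv, hs, map_sum]
      have : ∀ i : Fin n, ppSumValsHom (Fin (n + 1)) (Finsupp.single (i.castSucc) (q - 1))
          = q - 1 := fun i => Finsupp.sum_single_index (h := fun _ e => e) rfl
      rw [Finset.sum_congr rfl fun i _ => this i, Finset.sum_const, Finset.card_univ,
        Fintype.card_fin, smul_eq_mul]
    have hple : p.totalDegree ≤ q - 2 := hfdeg ▸ pp_aux_tdeg f _
    have hub : h.totalDegree ≤ n * (q - 1) + (q - 2) := by
      rw [hdef]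
      refine (totalDegree_mul _ _).trans ?_
      have h1 : ((∏ i : Fin n,
          (X i.castSucc : MvPolynomial (Fin (n + 1)) F) ^ (q - 1)) + C α).totalDegree
          ≤ n * (q - 1) := by
        refine (totalDegree_add _ _).trans (max_le ?_ ?_)
        · rw [hg]
          exact (totalDegree_monomial_le _ _).trans hssum.le
        · simp [totalDegree_C]
      exact add_le_add h1 hple
    -- lower bound via coefficient
    set t : Fin (n + 1) →₀ ℕ := Finsupp.single (Fin.last n) (q - 2) with ht
    have hcoefft : coeff t p = f.coeff (q - 2) := pp_aux_coeff f _ _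
    have htsum : t.sum (fun _ e => e) = q - 2 := Finsupp.sum_single_index (h := fun _ e => e) rfl
    have hm0sum : (s + t).sum (fun _ e => e) = n * (q - 1) + (q - 2) := by
      rw [hsv, map_add, ← hsv, ← hsv, hssum, htsum]
    have hcoeff : coeff (s + t) h ≠ 0 := by
      rw [hdef, add_mul, hg, coeff_add, coeff_monomial_mul, one_mul, hcoefft]
      rcases Nat.eq_zero_or_pos n with hn | hn
      · subst hn
        have hs0 : s = 0 := by rw [hs]; simp
        rw [hs0]
        simp only [zero_add]
        rw [coeff_C_mul, hcoefft]
        intro hcon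
        exact hlc (by
          have : (1 + α) * f.coeff (q - 2) = 0 := by linear_combination hcon
          rcases mul_eq_zero.mp this with h' | h'
          · exact absurd h' h1α
          · exact h')
      · have hz : coeff (s + t) (C α * p) = 0 := by
          rw [coeff_C_mul]
          rcases eq_or_ne (coeff (s + t) p) 0 with hz | hz
          · rw [hz, mul_zero]
          · exfalso
            have hle : (s + t).sum (fun _ e => e) ≤ p.totalDegree :=
              le_totalDegree (by rwa [mem_support_iff])
            rw [hm0sum] at hle
            have : n * (q - 1) + (q - 2) ≤ q - 2 := hle.trans hple
            have : 1 * (q - 1) ≤ n * (q - 1) := Nat.mul_le_mul_right _ hn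
            omega
        rw [hz, add_zero]
        exact hlc
    have hlb : n * (q - 1) + (q - 2) ≤ h.totalDegree := by
      rw [← hm0sum]
      exact le_totalDegree (by rwa [mem_support_iff])
    omega
end

section
/- Let q = 2^r > 2. For every n ≥ 1, the polynomial β_q^{(n)}(x_1,…,x_n) = ∑ x_1^{i_1} x_2^{i_2} ⋯ x_n^{i_n} + x_1 + ⋯ + x_n ∈ F_q[x_1,…,x_n], where the sum ranges over all exponent tuples with 1 ≤ i_j ≤ q − 2 for every j, is a local permutation polynomial of total degree n(q-2). -/
open MvPolynomial

/-- For `q = 2^r > 2`, the polynomial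
`β_q^{(n)} = ∑ x_1^{i_1} ⋯ x_n^{i_n} + x_1 + ⋯ + x_n`, summed over all exponent
tuples with `1 ≤ i_j ≤ q - 2`, is a local permutation polynomial of total degree
`n(q-2)`. -/
theorem lpp_max_degree_char2 {r n : ℕ} (hn : 1 ≤ n)
    {F : Type*} [Field F] [Fintype F] [DecidableEq F]
    (hF : Fintype.card F = 2 ^ r) (hq : 2 < Fintype.card F)
    (β : MvPolynomial (Fin n) F)
    (hβ : β = (∑ e ∈ Fintype.piFinset
        (fun _ : Fin n => Finset.Icc 1 (Fintype.card F - 2)),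
        ∏ j, X j ^ e j) + ∑ j, X j) :
    (∀ (i : Fin n) (x : Fin n → F),
      Function.Bijective fun c : F => eval (Function.update x i c) β) ∧
    β.totalDegree = n * (Fintype.card F - 2) := by
  set q := Fintype.card F with hqdef
  -- characteristic 2 facts
  have hr : r ≠ 0 := by
    intro h; rw [h, pow_zero] at hF; omega
  have hcast : (q : F) = 0 := FiniteField.cast_card_eq_zero F
  have h2 : (2 : F) = 0 := by
    have := hcast
    rw [hF] at this
    push_cast at this
    exact pow_eq_zero_iff hr |>.mp this
  have hneg : ∀ x : F, -x = x := fun x => by linear_combination (-x) * h2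
  have hq4 : 4 ≤ q := by
    rw [hF]
    rcases Nat.lt_or_ge r 2 with h | h
    · exfalso; rw [hF] at hq; interval_cases r <;> omega
    · calc (4:ℕ) = 2 ^ 2 := rfl
        _ ≤ 2 ^ r := Nat.pow_le_pow_right (by norm_num) h
  have hq2 : 2 ≤ q - 2 := by omega
  -- the auxiliary sum
  set S : F → F := fun a => ∑ i ∈ Finset.Icc 1 (q - 2), a ^ i with hSdef
  have hS0 : S 0 = 0 := by
    apply Finset.sum_eq_zero
    intro i hi
    rw [Finset.mem_Icc] at hi
    exact zero_pow (by omega)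
  have hS1 : S 1 = 0 := by
    simp only [hSdef, one_pow, Finset.sum_const, Nat.card_Icc, nsmul_eq_mul, mul_one]
    have e : q - 2 + 1 - 1 = q - 2 := by omega
    rw [e, Nat.cast_sub (by omega : 2 ≤ q)]
    push_cast
    rw [hcast, h2]
    ring
  have hSa : ∀ a : F, a ≠ 0 → a ≠ 1 → S a = 1 := by
    intro a ha0 ha1
    have hpow : a ^ (q - 2) * a = 1 := by
      rw [← pow_succ, show q - 2 + 1 = q - 1 by omega]
      exact FiniteField.pow_card_sub_one_eq_one a ha0
    have hrange : S a = a * ∑ i ∈ Finset.range (q - 2), a ^ i := by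
      rw [hSdef]
      show ∑ i ∈ Finset.Icc 1 (q - 2), a ^ i = _
      rw [← Finset.Ico_add_one_right_eq_Icc, Finset.sum_Ico_eq_sum_range, Finset.mul_sum]
      have e : q - 2 + 1 - 1 = q - 2 := by omega
      rw [e]
      refine Finset.sum_congr rfl fun i _ => ?_
      rw [pow_add, pow_one, mul_comm a]
    have hgeom : ∑ i ∈ Finset.range (q - 2), a ^ i = (a ^ (q - 2) - 1) / (a - 1) :=
      geom_sum_eq ha1 _
    have hsub : a - 1 ≠ 0 := sub_ne_zero.mpr ha1
    rw [hrange, hgeom]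
    field_simp
    linear_combination hpow + (1 - a) * h2
  have hS01 : ∀ a : F, S a = 0 ∨ S a = 1 := by
    intro a
    by_cases h0 : a = 0
    · left; rw [h0, hS0]
    by_cases h1 : a = 1
    · left; rw [h1, hS1]
    · right; exact hSa a h0 h1
  -- evaluation formula
  have heval : ∀ x : Fin n → F, eval x β = (∏ j, S (x j)) + ∑ j, x j := by
    intro x
    rw [hβ]
    simp only [map_add, map_sum, eval_prod, eval_pow, eval_X]
    congr 1
    exact (Finset.prod_univ_sum _ _).symm
  -- the map c ↦ S c + c is an involution
  have hg : Function.Involutive (fun c : F => S c + c) := by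
    intro c
    by_cases h0 : c = 0
    · simp [h0, hS0]
    by_cases h1 : c = 1
    · simp [h1, hS1]
    have hc : S c = 1 := hSa c h0 h1
    simp only [hc]
    have h10 : (1 : F) + c ≠ 0 := by
      intro h
      apply h1
      have : c = -1 := by linear_combination h
      rw [this, hneg]
    have h11 : (1 : F) + c ≠ 1 := by
      intro h
      exact h0 (by linear_combination h)
    rw [hSa _ h10 h11]
    linear_combination h2
  constructor
  · -- bijectivity
    intro i x
    have hfun : (fun c : F => eval (Function.update x i c) β)
        = fun c => S c * (∏ j ∈ Finset.univ \ {i}, S (x j))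
            + (c + ∑ j ∈ Finset.univ \ {i}, x j) := by
      funext c
      rw [heval]
      rw [Finset.prod_eq_mul_prod_sdiff_singleton_of_mem (Finset.mem_univ i),
        Finset.sum_eq_add_sum_sdiff_singleton_of_mem (Finset.mem_univ i)]
      simp only [Function.update_self]
      congr 1
      · congr 1
        refine Finset.prod_congr rfl fun j hj => ?_
        rw [Function.update_of_ne (by simp at hj; exact hj)]
      · congr 1
        refine Finset.sum_congr rfl fun j hj => ?_
        rw [Function.update_of_ne (by simp at hj; exact hj)]
    rw [hfun]
    have hP : (∏ j ∈ Finset.univ \ {i}, S (x j)) = 0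
        ∨ (∏ j ∈ Finset.univ \ {i}, S (x j)) = 1 := by
      refine Finset.prod_induction _ (fun y => y = 0 ∨ y = 1) ?_ (by right; rfl)
        (fun j _ => hS01 (x j))
      rintro a b (rfl | rfl) hb
      · left; rw [zero_mul]
      · rwa [one_mul]
    set K := ∑ j ∈ Finset.univ \ {i}, x j
    rcases hP with hP | hP
    · rw [hP]
      simp only [mul_zero, zero_add]
      exact (Equiv.addRight K).bijective
    · rw [hP]
      simp only [mul_one]
      have : (fun c : F => S c + (c + K)) = (fun y => y + K) ∘ (fun c => S c + c) := by
        funext c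
        show S c + (c + K) = (S c + c) + K
        ring
      rw [this]
      exact ((Equiv.addRight K).bijective).comp hg.bijective
  · -- total degree
    have hmono : ∀ e : Fin n → ℕ, (∏ j, (X j : MvPolynomial (Fin n) F) ^ e j)
        = monomial (Finsupp.equivFunOnFinite.symm e) 1 := by
      intro e
      rw [← prod_X_pow_eq_monomial]
      refine (Finset.prod_subset (Finset.subset_univ _) ?_).symm
      intro x _ hx
      have h0 : e x = 0 := Finsupp.notMem_support_iff.mp hx
      rw [h0, pow_zero]
    set m : (Fin n) →₀ ℕ := Finsupp.equivFunOnFinite.symm (fun _ : Fin n => q - 2)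
      with hm
    have hmval : ∀ j, m j = q - 2 := fun j => rfl
    have hcoeff : coeff m β = 1 := by
      rw [hβ, coeff_add, MvPolynomial.coeff_sum, MvPolynomial.coeff_sum]
      have h1 : ∑ e ∈ Fintype.piFinset (fun _ : Fin n => Finset.Icc 1 (q - 2)),
          coeff m (∏ j, (X j : MvPolynomial (Fin n) F) ^ e j) = 1 := by
        rw [Finset.sum_eq_single_of_mem (fun _ : Fin n => q - 2)]
        · rw [hmono, coeff_monomial, if_pos rfl]
        · rw [Fintype.mem_piFinset]
          intro j
          rw [Finset.mem_Icc]
          omega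
        · intro e _ hne
          rw [hmono, coeff_monomial, if_neg]
          intro h
          exact hne (Finsupp.equivFunOnFinite.symm.injective (h.trans hm))
      have h2 : ∑ j : Fin n, coeff m (X j : MvPolynomial (Fin n) F) = 0 := by
        apply Finset.sum_eq_zero
        intro j _
        rw [coeff_X', if_neg]
        intro h
        have h' : (Finsupp.single j 1) j = m j := by rw [h]
        rw [Finsupp.single_eq_same, hmval j] at h'
        omega
      rw [h1, h2, add_zero]
    apply le_antisymm
    · rw [hβ]
      refine le_trans (totalDegree_add _ _) (max_le ?_ ?_)
      · refine le_trans (totalDegree_finset_sum _ _) (Finset.sup_le fun e he => ?_)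
        refine le_trans (totalDegree_finset_prod _ _) ?_
        rw [Fintype.mem_piFinset] at he
        calc ∑ j, ((X j : MvPolynomial (Fin n) F) ^ e j).totalDegree
            = ∑ j : Fin n, e j := by simp [totalDegree_X_pow]
          _ ≤ ∑ _j : Fin n, (q - 2) :=
              Finset.sum_le_sum fun j _ => (Finset.mem_Icc.mp (he j)).2
          _ = n * (q - 2) := by
              rw [Finset.sum_const, Finset.card_univ, Fintype.card_fin, smul_eq_mul]
      · refine le_trans (totalDegree_finset_sum _ _) (Finset.sup_le fun j _ => ?_)
        rw [totalDegree_X]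
        calc 1 = 1 * 1 := rfl
          _ ≤ n * (q - 2) := Nat.mul_le_mul hn (by omega)
    · have hsupp : m ∈ β.support := by
        rw [MvPolynomial.mem_support_iff, hcoeff]
        exact one_ne_zero
      have hle := le_totalDegree hsupp
      have hsum : (m.sum fun _ e => e) = n * (q - 2) := by
        rw [Finsupp.sum_fintype _ _ (fun _ => rfl)]
        simp only [hmval]
        rw [Finset.sum_const, Finset.card_univ, Fintype.card_fin, smul_eq_mul]
      rwa [hsum] at hle
end

section
/- Let q = p^r be a prime power and suppose there exists an integer b with 1 < b < p − 1 and gcd(b, q − 1) = 1. Then for every n ≥ 1 there exists a local permutation polynomial in F_q[x_1,…,x_n], with all coefficients in the prime field F_p, of total degree n(q-2) (the maximum possible degree of an LPP). -/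
open MvPolynomial

/-- If `q = p^r` and there is `b` with `1 < b < p - 1` and `gcd(b, q-1) = 1`, then for
every `n ≥ 1` there is a local permutation polynomial in `n` variables over `F_q`, with
all coefficients in the prime field, of maximum total degree `n(q-2)`. -/
theorem lpp_max_degree_of_coprime {p r : ℕ} (hp : p.Prime) (hr : 0 < r)
    {F : Type*} [Field F] [Fintype F] [DecidableEq F]
    (hF : Fintype.card F = p ^ r)
    (b : ℕ) (hb1 : 1 < b) (hb2 : b < p - 1)
    (hbq : Nat.gcd b (Fintype.card F - 1) = 1)
    (n : ℕ) (hn : 1 ≤ n) :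
    ∃ f : MvPolynomial (Fin n) F,
      (∀ d : Fin n →₀ ℕ, ∃ k : ℤ, f.coeff d = (k : F)) ∧
      (∀ (i : Fin n) (x : Fin n → F),
        Function.Bijective fun c : F => eval (Function.update x i c) f) ∧
      f.totalDegree = n * (Fintype.card F - 2) := by
  classical
  set q := Fintype.card F with hq
  -- `p ≥ 5`
  have hp5 : 5 ≤ p := by
    have h4 : 4 ≤ p := by omega
    have hne4 : p ≠ 4 := by
      rintro rfl
      exact absurd hp (by norm_num)
    omega
  have hq5 : 5 ≤ q := by
    have h1 : p ≤ p ^ r := Nat.le_self_pow (by omega) p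
    omega
  -- the `q-2` power is inversion
  have hkey : ∀ c : F, c ^ (q - 2) = c⁻¹ := by
    intro c
    rcases eq_or_ne c 0 with rfl | hc
    · rw [zero_pow (by omega), inv_zero]
    · have h1 : c ^ (q - 2) * c = 1 := by
        rw [← pow_succ]
        have h2 : q - 2 + 1 = q - 1 := by omega
        rw [h2]
        exact FiniteField.pow_card_sub_one_eq_one c hc
      exact eq_inv_of_mul_eq_one_left h1
  have hinvbij : Function.Bijective (fun c : F => c⁻¹) :=
    inv_involutive.bijective
  rcases (by omega : n = 1 ∨ 2 ≤ n) with rfl | hn2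
  · -- one-variable case : `f = X 0 ^ (q-2)`
    refine ⟨X 0 ^ (q - 2), ?_, ?_, ?_⟩
    · intro d
      refine ⟨if Finsupp.single 0 (q - 2) = d then 1 else 0, ?_⟩
      simp [coeff_X_pow, apply_ite (Int.cast : ℤ → F)]
    · intro i x
      have hi : i = 0 := Subsingleton.elim _ _
      subst hi
      have heq : (fun c : F => eval (Function.update x 0 c) (X 0 ^ (q - 2) : MvPolynomial (Fin 1) F))
          = fun c : F => c⁻¹ := by
        funext c
        rw [eval_pow, eval_X, Function.update_self, hkey]
      rw [heq]
      exact hinvbij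
    · rw [totalDegree_X_pow, one_mul]
  · -- several variables
    set D := n * (q - 2) with hD
    set E := D - (q - 1) with hE
    have hD2 : 2 * (q - 2) ≤ D := by
      rw [hD]; exact Nat.mul_le_mul_right _ hn2
    have hED : E + (q - 1) = D := by omega
    have hE1 : 1 ≤ E := by omega
    have hEltD : E < D := by omega
    have hDneq : D ≠ q - 2 := by omega
    set i0 : Fin n := ⟨0, by omega⟩ with hi0
    set f : MvPolynomial (Fin n) F :=
      (∑ j : Fin n, X j ^ (q - 2)) + (X i0 ^ D - X i0 ^ E) with hf
    refine ⟨f, ?_, ?_, ?_⟩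
    · -- coefficients are integers
      intro d
      refine ⟨(∑ j : Fin n, if Finsupp.single j (q - 2) = d then (1 : ℤ) else 0)
        + ((if Finsupp.single i0 D = d then (1 : ℤ) else 0)
          - (if Finsupp.single i0 E = d then (1 : ℤ) else 0)), ?_⟩
      simp [hf, coeff_sum, coeff_X_pow, apply_ite (Int.cast : ℤ → F)]
    · -- local permutation property
      intro i x
      have hzero : ∀ a : F, a ^ D - a ^ E = 0 := by
        intro a
        rcases eq_or_ne a 0 with rfl | ha
        · rw [zero_pow (by omega), zero_pow (by omega), sub_zero]
        · rw [← hED, pow_add, FiniteField.pow_card_sub_one_eq_one a ha, mul_one, sub_self]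
      have heq : (fun c : F => eval (Function.update x i c) f)
          = (fun t : F => t + ∑ j ∈ Finset.univ.erase i, x j ^ (q - 2))
            ∘ (fun c : F => c⁻¹) := by
        funext c
        have h1 : eval (Function.update x i c) f
            = (∑ j : Fin n, (Function.update x i c j) ^ (q - 2))
              + ((Function.update x i c i0) ^ D - (Function.update x i c i0) ^ E) := by
          simp [hf]
        rw [h1, hzero, add_zero,
          ← Finset.add_sum_erase Finset.univ (fun j => (Function.update x i c j) ^ (q - 2))
            (Finset.mem_univ i), Function.update_self, hkey]
        simp only [Function.comp_apply]
        congr 1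
        exact Finset.sum_congr rfl fun j hj => by
          rw [Function.update_of_ne (Finset.ne_of_mem_erase hj)]
      rw [heq]
      exact ((Equiv.addRight _).bijective).comp hinvbij
    · -- total degree
      apply le_antisymm
      · refine (totalDegree_add _ _).trans (max_le ?_ ?_)
        · refine ((totalDegree_finset_sum _ _).trans
            (Finset.sup_le fun j _ => ?_)).trans (by omega : q - 2 ≤ D)
          rw [totalDegree_X_pow]
        · refine (totalDegree_sub _ _).trans (max_le ?_ ?_) <;>
            rw [totalDegree_X_pow]
          · omega
      · have hc : coeff (Finsupp.single i0 D) f = 1 := by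
          have hzs : ∀ j : Fin n,
              ¬ (Finsupp.single j (q - 2) = Finsupp.single i0 D) := by
            intro j h
            rcases (Finsupp.single_eq_single_iff _ _ _ _).mp h with ⟨-, h2⟩ | ⟨h2, -⟩ <;> omega
          have hEne : ¬ (Finsupp.single i0 E = Finsupp.single i0 D) := by
            intro h
            rcases (Finsupp.single_eq_single_iff _ _ _ _).mp h with ⟨-, h2⟩ | ⟨h2, h3⟩ <;> omega
          simp only [hf, coeff_add, coeff_sub, coeff_sum, coeff_X_pow]
          rw [if_neg hEne, Finset.sum_eq_zero fun j _ => if_neg (hzs j)]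
          norm_num
        have hmem : Finsupp.single i0 D ∈ f.support := by
          rw [mem_support_iff, hc]; exact one_ne_zero
        have hle := le_totalDegree hmem
        rwa [Finsupp.sum_single_index rfl] at hle
end

section
/- Let q = p^r > 3 with p ≥ 3 prime. For every n ≥ 1 there exists a local permutation polynomial f ∈ F_q[x_1,…,x_n] of total degree n(q-2) (the maximum possible degree of an LPP). -/
open MvPolynomial

lemma pow_card_sub_two_bij {F : Type*} [Field F] [Fintype F] [DecidableEq F]
    (hq : 3 < Fintype.card F) :
    Function.Bijective (fun x : F => x ^ (Fintype.card F - 2)) := by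
  have : (fun x : F => x ^ (Fintype.card F - 2)) = (fun x : F => x⁻¹) := by
    funext x
    rcases eq_or_ne x 0 with rfl | hx
    · simp [zero_pow, Nat.sub_ne_zero_of_lt (by omega : 2 < Fintype.card F)]
    · refine eq_inv_of_mul_eq_one_left ?_
      have h1 : x ^ (Fintype.card F - 2) * x = x ^ (Fintype.card F - 1) := by
        rw [← pow_succ]; congr 1; omega
      rw [h1, FiniteField.pow_card_sub_one_eq_one x hx]
  rw [this]
  exact inv_involutive.bijective

/-- For every `q = p^r > 3` with `p ≥ 3` prime and every `n ≥ 1`, there exists a local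
permutation polynomial in `n` variables over `F_q` of maximum total degree `n(q-2)`. -/
theorem exists_lpp_max_degree_odd_char {p r : ℕ} (hp : p.Prime) (hp3 : 3 ≤ p) (hr : 0 < r)
    {F : Type*} [Field F] [Fintype F] [DecidableEq F]
    (hF : Fintype.card F = p ^ r) (hq : 3 < Fintype.card F)
    (n : ℕ) (hn : 1 ≤ n) :
    ∃ f : MvPolynomial (Fin n) F,
      (∀ (i : Fin n) (x : Fin n → F),
        Function.Bijective fun c : F => eval (Function.update x i c) f) ∧
      f.totalDegree = n * (Fintype.card F - 2) := by
  set q := Fintype.card F with hqdef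
  set D := n * (q - 2) with hD
  set i0 : Fin n := ⟨0, hn⟩ with hi0
  set g : MvPolynomial (Fin n) F :=
    if n = 1 then 0 else (X i0 ^ q - X i0) * X i0 ^ (D - q) with hg
  set s : MvPolynomial (Fin n) F := ∑ j, X j ^ (q - 2) with hs
  refine ⟨s + g, ?_, ?_⟩
  · -- local permutation property
    intro i x
    have hg0 : ∀ y : Fin n → F, eval y g = 0 := by
      intro y
      rw [hg]
      split
      · simp
      · rw [eval_mul, eval_sub, eval_pow, eval_X, FiniteField.pow_card, sub_self, zero_mul]
    have hkey : (fun c : F => eval (Function.update x i c) (s + g)) =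
        (fun c : F => c + (∑ j ∈ Finset.univ \ {i}, x j ^ (q - 2))) ∘
          (fun c : F => c ^ (q - 2)) := by
      funext c
      simp only [map_add, hg0, add_zero, Function.comp_apply, hs, map_sum, map_pow, eval_X]
      have h1 : ∀ j, Function.update x i c j ^ (q - 2) =
          Function.update (fun k => x k ^ (q - 2)) i (c ^ (q - 2)) j := by
        intro j
        exact Function.apply_update (fun _ a => a ^ (q - 2)) x i c j
      simp_rw [h1]
      rw [Finset.sum_update_of_mem (Finset.mem_univ i)]
    rw [hkey]
    exact (Equiv.addRight _).bijective.comp (pow_card_sub_two_bij hq)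
  · -- total degree
    rcases eq_or_lt_of_le hn with h1 | h2
    · -- n = 1
      have hn1 : n = 1 := h1.symm
      subst hn1
      have : g = 0 := by rw [hg]; simp
      rw [this, add_zero, hs, Fin.sum_univ_one, totalDegree_X_pow]
      omega
    · -- n ≥ 2
      have h2n : 2 ≤ n := h2
      have hqD : q ≤ D := by
        calc q ≤ 2 * (q - 2) := by omega
        _ ≤ n * (q - 2) := Nat.mul_le_mul_right _ h2n
      have hgsplit : g = - X i0 ^ (D - q + 1) + X i0 ^ D := by
        rw [hg, if_neg (by omega), sub_mul, ← pow_add, ← pow_succ']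
        have e1 : q + (D - q) = D := by omega
        rw [e1]
        ring
      rw [hgsplit, ← add_assoc]
      rw [totalDegree_add_eq_right_of_totalDegree_lt, totalDegree_X_pow]
      rw [totalDegree_X_pow]
      calc (s + -X i0 ^ (D - q + 1)).totalDegree
          ≤ max s.totalDegree (-X i0 ^ (D - q + 1) : MvPolynomial (Fin n) F).totalDegree :=
            totalDegree_add _ _
        _ < D := by
            refine max_lt ?_ ?_
            · refine lt_of_le_of_lt (totalDegree_finset_sum _ _) ?_
              have : ∀ j ∈ (Finset.univ : Finset (Fin n)),
                  (X j ^ (q - 2) : MvPolynomial (Fin n) F).totalDegree ≤ q - 2 := by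
                intro j _; rw [totalDegree_X_pow]
              refine lt_of_le_of_lt (Finset.sup_le this) ?_
              omega
            · rw [← totalDegree_neg, neg_neg, totalDegree_X_pow]
              omega
end

section
/- Let q = p^r > 3 with p an odd prime, and let t(x) = x + ∑_{k=0}^{q-2} x^k ∈ F_q[x]. The reduced form (degree less than q in each variable) of the polynomial f_2(x_1,x_2) = t(x_1^{q-2} + x_2^{q-2}) ∈ F_q[x_1,x_2] has total degree 2(q-2), and f_2 is a local permutation polynomial. -/
/-!
Write `q = |F|`. Since `a ^ (q - 2) = a⁻¹` and `t` induces the transposition `(0 1)`, `f₂` is the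
function `(a, b) ↦ (0 1) (a⁻¹ + b⁻¹)`; with one variable fixed this is a composition of bijections.

For a reduced polynomial, the coefficient of `x ^ d` with `0 < dᵢ < q` is, up to sign, the sum
`∑ₓ f(x) ∏ᵢ xᵢ ^ (q - 1 - dᵢ)`, because for `m ≤ 2q - 3` the power sum `∑ₐ a ^ m` is `-1` if
`m = q - 1` and `0` otherwise. Substituting `u = a⁻¹`, `v = b⁻¹` and writing
`(0 1) S = S + [S = 0] - [S = 1]`, the monomials of degree above `2(q - 2)` get coefficient `0`,
while `(x₁ x₂) ^ (q - 2)` gets `-∑ᵤ u⁻¹ (1 - u)⁻¹ = 2`, which is nonzero as `p` is odd.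
-/

open Finset MvPolynomial

theorem Equiv.swap_zero_one_apply {R : Type*} [AddGroupWithOne R] [DecidableEq R] (S : R) :
    Equiv.swap (0 : R) 1 S = S + (if S = 0 then 1 else 0) - (if S = 1 then 1 else 0) := by
  rw [Equiv.swap_apply_def]
  split_ifs with h0 h1 <;> simp_all

theorem Finset.sum_sum_ite_add_eq {G M : Type*} [AddGroup G] [Fintype G] [DecidableEq G]
    [AddCommMonoid M] (c : G) (g : G → G → M) :
    ∑ u : G, ∑ v : G, (if u + v = c then g u v else 0) = ∑ u : G, g u (-u + c) := by
  simp_rw [← eq_neg_add_iff_add_eq, sum_ite_eq', mem_univ, if_true]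

namespace FiniteField

variable {K : Type*} [Field K] [Fintype K]

theorem sum_pow_card_sub_one : ∑ a : K, a ^ (Fintype.card K - 1) = -1 := by
  classical
  have hq := Fintype.one_lt_card (α := K)
  have h : ∀ a : K, a ^ (Fintype.card K - 1) = 1 - if a = 0 then 1 else 0 := by
    intro a
    split_ifs with ha
    · rw [ha, zero_pow (by omega), sub_self]
    · rw [pow_card_sub_one_eq_one a ha, sub_zero]
  simp [h, sum_sub_distrib]

theorem sum_pow_add_card_sub_one_sub {e d : ℕ} (he : e < Fintype.card K) (hd : 0 < d)
    (hdq : d < Fintype.card K) :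
    ∑ a : K, a ^ (e + (Fintype.card K - 1 - d)) = if e = d then -1 else 0 := by
  rcases lt_trichotomy e d with hlt | rfl | hgt
  · rw [if_neg hlt.ne, sum_pow_lt_card_sub_one _ _ (by omega)]
  · rw [if_pos rfl, Nat.add_sub_of_le (by omega), sum_pow_card_sub_one]
  · have hm : e + (Fintype.card K - 1 - d) = e - d - 1 + Fintype.card K := by omega
    simp_rw [if_neg hgt.ne', hm, pow_add, pow_card, ← pow_succ]
    exact sum_pow_lt_card_sub_one _ _ (by omega)

theorem pow_card_sub_two_eq_inv (hq : 2 < Fintype.card K) (a : K) :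
    a ^ (Fintype.card K - 2) = a⁻¹ := by
  rcases eq_or_ne a 0 with rfl | ha
  · rw [zero_pow (by omega), inv_zero]
  · refine eq_inv_of_mul_eq_one_left ?_
    rw [← pow_succ, show Fintype.card K - 2 + 1 = Fintype.card K - 1 by omega,
      pow_card_sub_one_eq_one a ha]

theorem sum_inv_pow_eq_zero {k : ℕ} (hk : k < Fintype.card K - 1) :
    ∑ a : K, a⁻¹ ^ k = 0 := by
  rw [Fintype.sum_equiv (Equiv.inv K) (fun a ↦ a⁻¹ ^ k) (· ^ k) fun _ ↦ rfl]
  exact sum_pow_lt_card_sub_one K k hk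

theorem sum_inv_eq_zero (hq : 2 < Fintype.card K) : ∑ a : K, a⁻¹ = 0 := by
  simpa using sum_inv_pow_eq_zero (K := K) (k := 1) (by omega)

theorem sum_inv_one_sub_eq_zero (hq : 2 < Fintype.card K) : ∑ a : K, (1 - a)⁻¹ = 0 := by
  rw [Fintype.sum_equiv (Equiv.subLeft (1 : K)) (fun a ↦ (1 - a)⁻¹) (·⁻¹) fun _ ↦ rfl]
  exact sum_inv_eq_zero hq

theorem sum_inv_mul_inv_one_sub (hq : 2 < Fintype.card K) :
    ∑ u : K, u⁻¹ * (1 - u)⁻¹ = -2 := by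
  classical
  -- partial fractions, corrected at the two poles where Lean's `0⁻¹ = 0` applies
  have hpartial : ∀ u : K, u⁻¹ * (1 - u)⁻¹ =
      u⁻¹ + (1 - u)⁻¹ - (if u = 0 then 1 else 0) - (if u = 1 then 1 else 0) := by
    intro u
    by_cases h0 : u = 0
    · simp [h0]
    by_cases h1 : u = 1
    · simp [h1]
    have h1' : 1 - u ≠ 0 := sub_ne_zero.2 (Ne.symm h1)
    rw [if_neg h0, if_neg h1]
    field_simp
    ring
  simp only [hpartial, sum_sub_distrib, sum_add_distrib, sum_inv_eq_zero hq,
    sum_inv_one_sub_eq_zero hq, sum_ite_eq', mem_univ, if_true]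
  ring

theorem sum_sum_swap_add_mul_inv_pow [DecidableEq K] (hq : 3 < Fintype.card K) {s t : ℕ}
    (hs : s ≤ 1) (ht : t ≤ 1) :
    ∑ u : K, ∑ v : K, Equiv.swap (0 : K) 1 (u + v) * (u⁻¹ ^ s * v⁻¹ ^ t) =
      if s = 1 ∧ t = 1 then 2 else 0 := by
  have hlin : ∑ u : K, ∑ v : K, (u + v) * (u⁻¹ ^ s * v⁻¹ ^ t) = 0 := by
    have hsplit : ∀ u v : K, (u + v) * (u⁻¹ ^ s * v⁻¹ ^ t) =
        u * u⁻¹ ^ s * v⁻¹ ^ t + u⁻¹ ^ s * (v * v⁻¹ ^ t) := fun u v ↦ by ring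
    simp_rw [hsplit, sum_add_distrib, ← sum_mul_sum,
      sum_inv_pow_eq_zero (K := K) (show s < _ by omega),
      sum_inv_pow_eq_zero (K := K) (show t < _ by omega), mul_zero, zero_mul, add_zero]
  have hzero : ∑ u : K, u⁻¹ ^ s * (-u + 0)⁻¹ ^ t = 0 := by
    have hsign : ∀ u : K, u⁻¹ ^ s * (-u + 0)⁻¹ ^ t = (-1) ^ t * u⁻¹ ^ (s + t) := fun u ↦ by
      rw [add_zero, inv_neg, neg_pow, pow_add]; ring
    simp_rw [hsign, ← mul_sum]
    rw [sum_inv_pow_eq_zero (by omega), mul_zero]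
  have hone : ∑ u : K, u⁻¹ ^ s * (-u + 1)⁻¹ ^ t = if s = 1 ∧ t = 1 then -2 else 0 := by
    simp_rw [neg_add_eq_sub]
    interval_cases s <;> interval_cases t
    · simp
    · simpa using sum_inv_one_sub_eq_zero (K := K) (by omega)
    · simpa using sum_inv_eq_zero (K := K) (by omega)
    · simpa using sum_inv_mul_inv_one_sub (K := K) (by omega)
  have hexpand : ∀ S w : K, Equiv.swap (0 : K) 1 S * w =
      S * w + (if S = 0 then w else 0) - (if S = 1 then w else 0) := fun S w ↦ by
    rw [Equiv.swap_zero_one_apply]; split_ifs <;> ring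
  simp only [hexpand, sum_add_distrib, sum_sub_distrib, sum_sum_ite_add_eq, hlin, hzero, hone]
  split_ifs <;> ring

theorem two_ne_zero_of_card_eq_pow {p r : ℕ} (hp : p.Prime) (hodd : p ≠ 2)
    (hK : Fintype.card K = p ^ r) : (2 : K) ≠ 0 :=
  Ring.two_ne_zero fun hchar ↦ by
    have heven := even_card_iff_char_two.1 hchar
    rw [hK, ← Nat.even_iff] at heven
    exact Nat.not_even_iff_odd.2 ((hp.odd_of_ne_two hodd).pow) heven

theorem eval_X_add_sum_range_pow [DecidableEq K] (S : K) :
    (Polynomial.X + ∑ k ∈ range (Fintype.card K - 1), Polynomial.X ^ k).eval S =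
      Equiv.swap (0 : K) 1 S := by
  have hq := Fintype.one_lt_card (α := K)
  simp only [Polynomial.eval_add, Polynomial.eval_X, Polynomial.eval_finsetSum,
    Polynomial.eval_pow, Equiv.swap_apply_def]
  split_ifs with h0 h1
  · subst h0
    simp [zero_pow_eq, sum_ite_eq', show 0 < Fintype.card K - 1 by omega]
  · subst h1
    simp [Nat.cast_sub hq.le]
  · rw [geom_sum_eq h1, pow_card_sub_one_eq_one S h0, sub_self, zero_div, add_zero]

end FiniteField

namespace MvPolynomial

variable {K : Type*} [Field K] [Fintype K]

theorem prod_sum_pow_add_card_sub_one_sub {σ : Type*} [Fintype σ] [DecidableEq σ] (e d : σ →₀ ℕ)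
    (he : ∀ i, e i < Fintype.card K) (hd : ∀ i, 0 < d i ∧ d i < Fintype.card K) :
    ∏ i, ∑ a : K, a ^ (e i + (Fintype.card K - 1 - d i)) =
      if e = d then (-1) ^ Fintype.card σ else 0 := by
  simp_rw [fun i ↦ FiniteField.sum_pow_add_card_sub_one_sub (he i) (hd i).1 (hd i).2]
  split_ifs with hed
  · simp [hed]
  · obtain ⟨i, hi⟩ : ∃ i, e i ≠ d i := by
      by_contra! h
      exact hed (Finsupp.ext h)
    exact prod_eq_zero (mem_univ i) (if_neg hi)

theorem sum_eval_mul_prod_pow_eq_coeff {σ : Type*} [Fintype σ] [DecidableEq σ]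
    (f : MvPolynomial σ K) (hf : ∀ i, f.degreeOf i < Fintype.card K) (d : σ →₀ ℕ)
    (hd : ∀ i, 0 < d i ∧ d i < Fintype.card K) :
    ∑ x : σ → K, eval x f * ∏ i, x i ^ (Fintype.card K - 1 - d i) =
      (-1) ^ Fintype.card σ * coeff d f := by
  have hq : 0 < Fintype.card K := Fintype.card_pos
  calc ∑ x : σ → K, eval x f * ∏ i, x i ^ (Fintype.card K - 1 - d i)
      = ∑ e ∈ f.support, coeff e f *
          ∏ i, ∑ a : K, a ^ (e i + (Fintype.card K - 1 - d i)) := by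
        simp_rw [eval_eq', sum_mul, mul_assoc, ← prod_mul_distrib, ← pow_add]
        rw [sum_comm]
        simp_rw [← mul_sum, Fintype.prod_sum]
    _ = ∑ e ∈ f.support, coeff e f * if e = d then (-1) ^ Fintype.card σ else 0 := by
        refine sum_congr rfl fun e he ↦ ?_
        rw [prod_sum_pow_add_card_sub_one_sub e d
          (fun i ↦ (degreeOf_lt_iff hq).1 (hf i) e he) hd]
    _ = (-1) ^ Fintype.card σ * coeff d f := by
        rw [sum_eq_single d (fun e _ hed ↦ by rw [if_neg hed, mul_zero])
          (fun hd ↦ by rw [notMem_support_iff.1 hd, zero_mul]), if_pos rfl, mul_comm]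

theorem totalDegree_eq_two_mul_of_corner {R : Type*} [CommSemiring R] {f : MvPolynomial (Fin 2) R}
    {n : ℕ} (hdeg : ∀ i, f.degreeOf i ≤ n + 1)
    (hcorner : ∀ d ∈ f.support, n ≤ d 0 → n ≤ d 1 → d 0 = n ∧ d 1 = n)
    (hmem : Finsupp.single 0 n + Finsupp.single 1 n ∈ f.support) :
    f.totalDegree = 2 * n := by
  have hsum : ∀ d : Fin 2 →₀ ℕ, (d.sum fun _ e ↦ e) = d 0 + d 1 := fun d ↦ by
    rw [Finsupp.sum_fintype _ _ fun _ ↦ rfl, Fin.sum_univ_two]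
  refine le_antisymm (Finset.sup_le fun d hd ↦ ?_) ?_
  · have h0 := degreeOf_le_iff.1 (hdeg 0) d hd
    have h1 := degreeOf_le_iff.1 (hdeg 1) d hd
    rw [hsum]
    by_contra hlt
    have := hcorner d hd (by omega) (by omega)
    omega
  · simpa [hsum, two_mul] using le_totalDegree hmem

theorem coeff_eq_of_eval_eq_swap_inv_add_inv [DecidableEq K] (hq : 3 < Fintype.card K)
    {f : MvPolynomial (Fin 2) K} (hf : ∀ i, f.degreeOf i < Fintype.card K)
    (heval : ∀ x, eval x f = Equiv.swap (0 : K) 1 ((x 0)⁻¹ + (x 1)⁻¹)) {d : Fin 2 →₀ ℕ}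
    (hd : ∀ i, Fintype.card K - 2 ≤ d i ∧ d i < Fintype.card K) :
    coeff d f = if d 0 = Fintype.card K - 2 ∧ d 1 = Fintype.card K - 2 then 2 else 0 := by
  have hextract := sum_eval_mul_prod_pow_eq_coeff f hf d fun i ↦ ⟨by have := hd i; omega, (hd i).2⟩
  have hd0 := hd 0
  have hd1 := hd 1
  rw [Fintype.card_fin, neg_one_sq, one_mul] at hextract
  rw [← hextract, ← Fintype.sum_equiv (Equiv.inv (Fin 2 → K)) _ _ fun _ ↦ rfl,
    ← Fintype.sum_equiv (finTwoArrowEquiv K).symm _ _ fun _ ↦ rfl, Fintype.sum_prod_type]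
  simp only [heval, Fin.prod_univ_two, Equiv.inv_apply, Pi.inv_apply, inv_inv,
    finTwoArrowEquiv_symm_apply, Matrix.cons_val_zero, Matrix.cons_val_one]
  rw [FiniteField.sum_sum_swap_add_mul_inv_pow hq (by omega) (by omega)]
  congr 1
  exact propext (by omega)

end MvPolynomial

theorem lpp_two_vars_max_degree_general {p r : ℕ} (hp : p.Prime) (hodd : p ≠ 2)
    {F : Type*} [Field F] [Fintype F] [DecidableEq F]
    (hF : Fintype.card F = p ^ r) (hq : 3 < Fintype.card F)
    (t : Polynomial F)
    (ht : t = Polynomial.X + ∑ k ∈ Finset.range (Fintype.card F - 1), Polynomial.X ^ k)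
    (f₂ : MvPolynomial (Fin 2) F)
    (hred : ∀ i : Fin 2, f₂.degreeOf i < Fintype.card F)
    (heq : ∀ x : Fin 2 → F, eval x f₂ =
      Polynomial.eval ((x 0) ^ (Fintype.card F - 2) + (x 1) ^ (Fintype.card F - 2)) t) :
    f₂.totalDegree = 2 * (Fintype.card F - 2) ∧
    (∀ (i : Fin 2) (x : Fin 2 → F),
      Function.Bijective fun c : F => eval (Function.update x i c) f₂) := by
  have heval : ∀ x : Fin 2 → F, eval x f₂ = Equiv.swap (0 : F) 1 ((x 0)⁻¹ + (x 1)⁻¹) := by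
    intro x
    have hpow := FiniteField.pow_card_sub_two_eq_inv (K := F) (by omega)
    rw [heq, ht, FiniteField.eval_X_add_sum_range_pow, hpow, hpow]
  have hcoeff := fun d hd ↦ coeff_eq_of_eval_eq_swap_inv_add_inv hq hred heval (d := d) hd
  refine ⟨totalDegree_eq_two_mul_of_corner (fun i ↦ ?_) (fun d hd h0 h1 ↦ ?_) ?_, ?_⟩
  · have := hred i
    omega
  · have hlt i := (degreeOf_lt_iff (by omega)).1 (hred i) d hd
    rw [mem_support_iff, hcoeff d fun i ↦ ⟨by fin_cases i <;> assumption, hlt i⟩] at hd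
    by_contra hne
    exact hd (if_neg hne)
  · rw [mem_support_iff, hcoeff _ fun i ↦ by fin_cases i <;> simp <;> omega]
    simpa using FiniteField.two_ne_zero_of_card_eq_pow hp hodd hF
  · intro i x
    have hinv := (Equiv.inv F).bijective
    fin_cases i <;> simp only [heval, Fin.zero_eta, Fin.mk_one, Function.update_self,
      Function.update_of_ne zero_ne_one, Function.update_of_ne one_ne_zero]
    · exact (Equiv.swap (0 : F) 1).bijective.comp ((Equiv.addRight _).bijective.comp hinv)
    · exact (Equiv.swap (0 : F) 1).bijective.comp ((Equiv.addLeft _).bijective.comp hinv)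

/-- For `q = p^r > 3` with `p` an odd prime and `t(x) = x + ∑_{k=0}^{q-2} x^k`, the
reduced form `f₂` of `t(x₁^{q-2} + x₂^{q-2})` has total degree `2(q-2)` and is a local
permutation polynomial.  Here `f₂` is characterised as the polynomial with degree `< q`
in each variable inducing the same function as `t(x₁^{q-2} + x₂^{q-2})`. -/
theorem lpp_two_vars_max_degree {p r : ℕ} (hp : p.Prime) (hodd : p ≠ 2) (hr : 0 < r)
    {F : Type*} [Field F] [Fintype F] [DecidableEq F]
    (hF : Fintype.card F = p ^ r) (hq : 3 < Fintype.card F)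
    (t : Polynomial F)
    (ht : t = Polynomial.X + ∑ k ∈ Finset.range (Fintype.card F - 1), Polynomial.X ^ k)
    (f₂ : MvPolynomial (Fin 2) F)
    (hred : ∀ i : Fin 2, f₂.degreeOf i < Fintype.card F)
    (heq : ∀ x : Fin 2 → F, eval x f₂ =
      Polynomial.eval ((x 0) ^ (Fintype.card F - 2) + (x 1) ^ (Fintype.card F - 2)) t) :
    f₂.totalDegree = 2 * (Fintype.card F - 2) ∧
    (∀ (i : Fin 2) (x : Fin 2 → F),
      Function.Bijective fun c : F => eval (Function.update x i c) f₂) :=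
  lpp_two_vars_max_degree_general hp hodd hF hq t ht f₂ hred heq
end

section
/- Let q = p^r > 3 with p a prime, p ≠ 2 and p ≠ 3, let t(x) = x + ∑_{k=0}^{q-2} x^k ∈ F_q[x], and let f_2(x_1,x_2) be the reduced form of t(x_1^{q-2} + x_2^{q-2}). Then the reduced form of t(f_2 + x_3^{q-2}) ∈ F_q[x_1,x_2,x_3] has total degree 3(q-2) (the maximum possible degree of an LPP in three variables). -/
/-!
Write `G` for the function of `g`; as `t` induces `swap 0 1` and `x ^ (q-2) = x⁻¹`,
`G x = swap (swap (x₁⁻¹ + x₂⁻¹) + x₃⁻¹)`, which is a bijection in each variable (a local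
permutation). For a reduced polynomial, orthogonality of power sums over `F` identifies the
coefficient of `x^a` (all `0 < aᵢ < q`) with `±∑ₓ G x ∏ xᵢ ^ (q-1-aᵢ)`. If the monomial has degree
above `3(q-2)`, some `aᵢ = q-1`, the sum runs over full lines in direction `i` and vanishes since
`∑_{y ∈ F} y = 0`. The coefficient of `(x₁x₂x₃)^(q-2)` is `-∑ G x · x₁x₂x₃`; after inverting the
variables, summing first over `x₃` and then along `x₁ + x₂ = s`, it reduces to one-variable sums of
powers of `s⁻¹` and `(1-s)⁻¹` and equals `6`, which is nonzero because `p ≠ 2, 3`.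
-/

open MvPolynomial Finset Function

section PowerSums

variable {F : Type*} [Field F] [Fintype F]

theorem sum_pow_eq_ite_of_lt {m : ℕ} (hm : m < 2 * (Fintype.card F - 1)) :
    ∑ x : F, x ^ m = if m = Fintype.card F - 1 then -1 else 0 := by
  classical
  have hq : 1 < Fintype.card F := Fintype.one_lt_card
  rcases lt_trichotomy m (Fintype.card F - 1) with hlt | rfl | hgt
  · rw [if_neg hlt.ne, FiniteField.sum_pow_lt_card_sub_one _ _ hlt]
  · have h : ∀ x : F, x ^ (Fintype.card F - 1) = 1 - if x = 0 then 1 else 0 := fun x => by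
      split_ifs with hx
      · simp [hx, show Fintype.card F - 1 ≠ 0 by omega]
      · simp [FiniteField.pow_card_sub_one_eq_one x hx]
    simp [h, sum_sub_distrib]
  · have h : ∀ x : F, x ^ m = x ^ (m - (Fintype.card F - 1)) := fun x => by
      conv_lhs => rw [show m = m - Fintype.card F + Fintype.card F by omega, pow_add,
        FiniteField.pow_card, ← pow_succ]
      congr 1
      omega
    rw [if_neg hgt.ne', sum_congr rfl fun x _ => h x,
      FiniteField.sum_pow_lt_card_sub_one _ _ (by omega)]

theorem pow_card_sub_two_eq_inv_s15 (hq : 2 < Fintype.card F) (x : F) :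
    x ^ (Fintype.card F - 2) = x⁻¹ := by
  rcases eq_or_ne x 0 with rfl | hx
  · rw [zero_pow (by omega), inv_zero]
  · refine eq_inv_of_mul_eq_one_left ?_
    rw [← pow_succ, show Fintype.card F - 2 + 1 = Fintype.card F - 1 by omega,
      FiniteField.pow_card_sub_one_eq_one x hx]

theorem sum_inv_pow_eq_zero {k : ℕ} (hk : k + 1 < Fintype.card F) : ∑ x : F, x⁻¹ ^ k = 0 := by
  rw [Fintype.sum_equiv (Equiv.inv F) (fun x => x⁻¹ ^ k) (· ^ k) fun _ => rfl,
    FiniteField.sum_pow_lt_card_sub_one _ _ (by omega)]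

theorem sum_inv_eq_zero (hq : 2 < Fintype.card F) : ∑ x : F, x⁻¹ = 0 := by
  simpa using sum_inv_pow_eq_zero (F := F) (k := 1) (by omega)

end PowerSums

section Coefficients

variable {F σ : Type*} [Field F] [Fintype F] [Fintype σ] [DecidableEq σ]

theorem coeff_eq_neg_one_pow_mul_sum {g : MvPolynomial σ F}
    (hg : ∀ i, g.degreeOf i < Fintype.card F) {a : σ →₀ ℕ}
    (ha : ∀ i, 0 < a i ∧ a i < Fintype.card F) :
    coeff a g = (-1) ^ Fintype.card σ *
      ∑ v : σ → F, eval v g * ∏ i, v i ^ (Fintype.card F - 1 - a i) := by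
  set q := Fintype.card F
  have hsupp : ∀ b ∈ g.support, ∀ i, b i < q := fun b hb i =>
    (degreeOf_lt_iff (by have := ha i; omega)).mp (hg i) b hb
  have hmonomial : ∀ b ∈ g.support,
      ∑ v : σ → F, ∏ i, v i ^ (b i + (q - 1 - a i))
        = if b = a then (-1) ^ Fintype.card σ else 0 := by
    intro b hb
    rw [← Fintype.prod_sum fun i x => x ^ (b i + (q - 1 - a i))]
    rw [prod_congr rfl fun i _ => sum_pow_eq_ite_of_lt (F := F) (m := b i + (q - 1 - a i))
      (by have := hsupp b hb i; have := ha i; omega)]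
    by_cases hba : b = a
    · subst hba
      rw [if_pos rfl, prod_congr rfl fun i _ => if_pos (by have := ha i; omega), prod_const,
        card_univ]
    · obtain ⟨i, hi⟩ : ∃ i, b i ≠ a i := by
        by_contra! h; exact hba (Finsupp.ext h)
      rw [if_neg hba]
      exact prod_eq_zero (mem_univ i) (if_neg (by have := ha i; omega))
  have hsum : ∑ v : σ → F, eval v g * ∏ i, v i ^ (q - 1 - a i)
      = (-1) ^ Fintype.card σ * coeff a g := by
    calc _ = ∑ b ∈ g.support, coeff b g * ∑ v : σ → F, ∏ i, v i ^ (b i + (q - 1 - a i)) := by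
          simp_rw [eval_eq', sum_mul, mul_sum, mul_assoc, ← prod_mul_distrib, ← pow_add]
          exact sum_comm
      _ = ∑ b ∈ g.support, coeff b g * if b = a then (-1) ^ Fintype.card σ else 0 :=
          sum_congr rfl fun b hb => by rw [hmonomial b hb]
      _ = (-1) ^ Fintype.card σ * coeff a g := by
          simp only [mul_ite, mul_zero, sum_ite_eq']
          split_ifs with ha
          · ring
          · rw [notMem_support_iff.mp ha, mul_zero]
  rw [hsum, ← mul_assoc, ← pow_add, ← two_mul, pow_mul, neg_one_sq, one_pow, one_mul]

end Coefficients

theorem exists_eq_sub_one_and_pos_of_mul_sub_two_lt_sum {σ : Type*} [Fintype σ] {q : ℕ}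
    {a : σ →₀ ℕ} (hq : 1 < q) (ha : ∀ i, a i < q) (hσ : Fintype.card σ < q)
    (hlt : Fintype.card σ * (q - 2) < a.sum fun _ e => e) :
    (∃ i, a i = q - 1) ∧ ∀ j, 0 < a j := by
  have hdeg : (a.sum fun _ e => e) + ∑ i, (q - 1 - a i) = Fintype.card σ * (q - 1) := by
    rw [Finsupp.sum_fintype _ _ fun _ => rfl, ← sum_add_distrib,
      sum_congr rfl fun i _ => show a i + (q - 1 - a i) = q - 1 by have := ha i; omega]
    simp
  have hn : Fintype.card σ * (q - 1) = Fintype.card σ * (q - 2) + Fintype.card σ := by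
    rw [show q - 1 = q - 2 + 1 by omega, Nat.mul_succ]
  have hd_lt : ∑ i, (q - 1 - a i) < Fintype.card σ := by omega
  refine ⟨?_, fun j => ?_⟩
  · by_contra! h
    have := card_nsmul_le_sum univ (fun i => q - 1 - a i) 1 fun i _ => by
      have := h i; have := ha i; omega
    simp only [card_univ, smul_eq_mul, mul_one] at this
    omega
  · have := single_le_sum (f := fun i => q - 1 - a i) (fun _ _ => Nat.zero_le _) (mem_univ j)
    have := ha j
    omega

section LocalPermutation

variable {σ : Type*} [DecidableEq σ]

def IsLocalPermutation {α : Type*} (G : (σ → α) → α) : Prop :=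
  ∀ (i : σ) (v : σ → α), Bijective fun x => G (update v i x)

variable {F : Type*} [Field F] [Fintype F] [Fintype σ]

theorem sum_mul_eq_zero_of_bijective_update (hq : 2 < Fintype.card F) {G P : (σ → F) → F}
    (i : σ) (hG : ∀ v, Bijective fun x => G (update v i x))
    (hP : ∀ v x, P (update v i x) = P v) :
    ∑ v, G v * P v = 0 := by
  let e := Equiv.funSplitAt i F
  have hsplit : ∀ x w, e.symm (x, w) = update (e.symm (0, w)) i x := fun x w => by
    ext j
    rcases eq_or_ne j i with rfl | h
    · simp [e]
    · simp only [e, Equiv.funSplitAt_symm_apply, update_of_ne h, dif_neg h]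
  have hline : ∀ v, ∑ x, G (update v i x) = 0 := fun v => by
    rw [Fintype.sum_bijective _ (hG v) (fun x => G (update v i x)) id fun _ => rfl]
    simpa using FiniteField.sum_pow_lt_card_sub_one F 1 (by omega)
  rw [← e.symm.sum_comp, Fintype.sum_prod_type_right]
  refine sum_eq_zero fun w _ => ?_
  rw [sum_congr rfl fun x _ => by rw [hsplit x w, hP], ← sum_mul, hline, zero_mul]

variable {g : MvPolynomial σ F}

theorem IsLocalPermutation.totalDegree_le (hG : IsLocalPermutation fun v => eval v g)
    (hq : 2 < Fintype.card F) (hσ : Fintype.card σ < Fintype.card F)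
    (hg : ∀ i, g.degreeOf i < Fintype.card F) :
    g.totalDegree ≤ Fintype.card σ * (Fintype.card F - 2) := by
  refine Finset.sup_le fun a ha => ?_
  by_contra! hlt
  have ha_lt : ∀ i, a i < Fintype.card F := fun i => (degreeOf_lt_iff (by omega)).mp (hg i) a ha
  obtain ⟨⟨i, hi⟩, ha_pos⟩ :=
    exists_eq_sub_one_and_pos_of_mul_sub_two_lt_sum (by omega) ha_lt hσ hlt
  have hP : ∀ (v : σ → F) (x : F), ∏ j, update v i x j ^ (Fintype.card F - 1 - a j)
      = ∏ j, v j ^ (Fintype.card F - 1 - a j) := fun v x =>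
    prod_congr rfl fun j _ => by
      rcases eq_or_ne j i with rfl | hj
      · simp [hi]
      · rw [update_of_ne hj]
  have hcoeff := coeff_eq_neg_one_pow_mul_sum hg fun j => ⟨ha_pos j, ha_lt j⟩
  rw [sum_mul_eq_zero_of_bijective_update hq i (hG i) hP, mul_zero] at hcoeff
  exact mem_support_iff.mp ha hcoeff

theorem le_totalDegree_of_sum_eval_mul_prod_ne_zero (hq : 2 < Fintype.card F)
    (hg : ∀ i, g.degreeOf i < Fintype.card F) (hsum : ∑ v : σ → F, eval v g * ∏ i, v i ≠ 0) :
    Fintype.card σ * (Fintype.card F - 2) ≤ g.totalDegree := by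
  set a : σ →₀ ℕ := Finsupp.equivFunOnFinite.symm fun _ => Fintype.card F - 2
  have hcoeff := coeff_eq_neg_one_pow_mul_sum hg (a := a) fun _ => by simp [a]; omega
  have ha : a ∈ g.support := by
    rw [mem_support_iff, hcoeff]
    simpa [a, show Fintype.card F - 1 - (Fintype.card F - 2) = 1 by omega] using hsum
  calc Fintype.card σ * (Fintype.card F - 2) = a.sum fun _ e => e := by
        simp [a, Finsupp.sum_fintype]
    _ ≤ g.totalDegree := le_totalDegree ha

theorem IsLocalPermutation.totalDegree_eq (hG : IsLocalPermutation fun v => eval v g)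
    (hq : 2 < Fintype.card F) (hσ : Fintype.card σ < Fintype.card F)
    (hg : ∀ i, g.degreeOf i < Fintype.card F) (hsum : ∑ v : σ → F, eval v g * ∏ i, v i ≠ 0) :
    g.totalDegree = Fintype.card σ * (Fintype.card F - 2) :=
  (hG.totalDegree_le hq hσ hg).antisymm (le_totalDegree_of_sum_eval_mul_prod_ne_zero hq hg hsum)

end LocalPermutation

section InverseSums

variable {F : Type*} [Field F] [Fintype F]

theorem sum_inv_sub_eq_zero (hq : 2 < Fintype.card F) (a : F) : ∑ x : F, (a - x)⁻¹ = 0 := by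
  rw [Fintype.sum_equiv (Equiv.subLeft a) (fun x => (a - x)⁻¹) (·⁻¹) fun _ => rfl,
    sum_inv_eq_zero hq]

theorem sum_mul_inv_self : ∑ x : F, x * x⁻¹ = -1 := by
  classical
  have h : ∀ x : F, x * x⁻¹ = if x = 0 then 0 else 1 := fun x => by
    split_ifs with hx <;> simp [hx]
  simp [h, sum_ite, filter_ne', Nat.cast_sub (Fintype.card_pos (α := F))]

theorem sum_inv_mul_inv_sub (hq : 3 < Fintype.card F) (s : F) :
    ∑ x, x⁻¹ * (s - x)⁻¹ = -2 * s⁻¹ ^ 2 := by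
  classical
  rcases eq_or_ne s 0 with rfl | hs
  · simp only [zero_sub, inv_neg, mul_neg, ← sq, sum_neg_distrib, inv_zero]
    rw [sum_inv_pow_eq_zero (by omega)]
    simp
  have hpf : ∀ x, x⁻¹ * (s - x)⁻¹ - s⁻¹ * (x⁻¹ + (s - x)⁻¹)
      = -s⁻¹ ^ 2 * ((if x = 0 then 1 else 0) + if x = s then 1 else 0) := fun x => by
    rcases eq_or_ne x 0 with rfl | h0
    · simp [hs.symm, sq]
    rcases eq_or_ne x s with rfl | hxs
    · simp [h0, sq]
    have : s - x ≠ 0 := sub_ne_zero.mpr hxs.symm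
    simp only [h0, hxs, if_false, add_zero, mul_zero]
    field_simp
    ring
  have := sum_congr rfl fun x (_ : x ∈ univ) => hpf x
  rw [sum_sub_distrib, ← mul_sum, sum_add_distrib, sum_inv_sub_eq_zero (by omega),
    sum_inv_eq_zero (by omega), ← mul_sum, sum_add_distrib] at this
  simp only [sum_ite_eq', mem_univ, if_true] at this
  linear_combination this

theorem sum_inv_sq_mul_inv_one_sub (hq : 3 < Fintype.card F) :
    ∑ s : F, s⁻¹ ^ 2 * (1 - s)⁻¹ = -3 := by
  classical
  have hpf : ∀ s : F, s⁻¹ ^ 2 * (1 - s)⁻¹ - (s⁻¹ ^ 2 + s⁻¹ + (1 - s)⁻¹)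
      = -((if s = 0 then 1 else 0) + if s = 1 then 2 else 0) := fun s => by
    rcases eq_or_ne s 0 with rfl | h0
    · simp
    rcases eq_or_ne s 1 with rfl | h1
    · norm_num
    have : 1 - s ≠ 0 := sub_ne_zero.mpr h1.symm
    simp only [h0, h1, if_false, add_zero, neg_zero]
    field_simp
    ring
  have := sum_congr rfl fun s (_ : s ∈ univ) => hpf s
  rw [sum_sub_distrib, sum_add_distrib, sum_add_distrib, sum_inv_sub_eq_zero (by omega),
    sum_inv_eq_zero (by omega), sum_inv_pow_eq_zero (by omega), sum_neg_distrib,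
    sum_add_distrib] at this
  simp only [sum_ite_eq', mem_univ, if_true] at this
  linear_combination this

theorem sum_sum_inv_mul_inv_mul_add (hq : 3 < Fintype.card F) (h : F → F) :
    ∑ x, ∑ y, x⁻¹ * y⁻¹ * h (x + y) = ∑ s, -2 * s⁻¹ ^ 2 * h s := by
  have hshift : ∀ x, ∑ y, x⁻¹ * y⁻¹ * h (x + y) = ∑ s, x⁻¹ * (s - x)⁻¹ * h s := fun x =>
    Fintype.sum_equiv (Equiv.addLeft x) _ _ fun y => by
      simp only [Equiv.coe_addLeft, add_sub_cancel_left]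
  simp_rw [hshift]
  rw [sum_comm]
  simp_rw [← sum_mul, sum_inv_mul_inv_sub hq]

end InverseSums

theorem sum_fin_three_arrow {α M : Type*} [Fintype α] [AddCommMonoid M] (f : (Fin 3 → α) → M) :
    ∑ v, f v = ∑ a, ∑ b, ∑ c, f ![a, b, c] := by
  rw [← (Fin.consEquiv fun _ => α).sum_comp, Fintype.sum_prod_type]
  simp_rw [← (finTwoArrowEquiv α).symm.sum_comp, Fintype.sum_prod_type]
  rfl

section SwapZeroOne

variable {F : Type*} [Field F] [DecidableEq F]

theorem inv_swap_add_inv_one_sub_swap (W : F) :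
    (Equiv.swap 0 1 W)⁻¹ + (1 - Equiv.swap 0 1 W)⁻¹ = W⁻¹ + (1 - W)⁻¹ := by
  rcases eq_or_ne W 0 with rfl | h0
  · simp
  rcases eq_or_ne W 1 with rfl | h1
  · simp
  · rw [Equiv.swap_apply_of_ne_of_ne h0 h1]

def threeVarLPP (v : Fin 3 → F) : F :=
  Equiv.swap 0 1 (Equiv.swap 0 1 ((v 0)⁻¹ + (v 1)⁻¹) + (v 2)⁻¹)

theorem isLocalPermutation_threeVarLPP : IsLocalPermutation (threeVarLPP (F := F)) := by
  intro i v
  fin_cases i <;> simp only [threeVarLPP, Fin.zero_eta, Fin.mk_one, Fin.reduceFinMk,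
    update_self, ne_eq, Fin.reduceEq, not_false_eq_true, update_of_ne]
  · exact (Equiv.swap 0 1).bijective.comp <| (Equiv.addRight _).bijective.comp <|
      (Equiv.swap 0 1).bijective.comp <| (Equiv.addRight _).bijective.comp (Equiv.inv F).bijective
  · exact (Equiv.swap 0 1).bijective.comp <| (Equiv.addRight _).bijective.comp <|
      (Equiv.swap 0 1).bijective.comp <| (Equiv.addLeft _).bijective.comp (Equiv.inv F).bijective
  · exact (Equiv.swap 0 1).bijective.comp <|
      (Equiv.addLeft _).bijective.comp (Equiv.inv F).bijective

variable [Fintype F]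

theorem eval_X_add_sum_range_pow (z : F) :
    (Polynomial.X + ∑ k ∈ range (Fintype.card F - 1), Polynomial.X ^ k).eval z
      = Equiv.swap 0 1 z := by
  have hq : 1 < Fintype.card F := Fintype.one_lt_card
  simp only [Polynomial.eval_add, Polynomial.eval_X, Polynomial.eval_finsetSum,
    Polynomial.eval_pow]
  rcases eq_or_ne z 0 with rfl | h0
  · rw [sum_eq_single_of_mem 0 (mem_range.mpr (by omega)) fun k _ hk => zero_pow hk]
    simp
  rcases eq_or_ne z 1 with rfl | h1
  · simp [Nat.cast_sub hq.le]
  · rw [geom_sum_eq h1, FiniteField.pow_card_sub_one_eq_one z h0, sub_self, zero_div, add_zero,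
      Equiv.swap_apply_of_ne_of_ne h0 h1]

theorem sum_swap_mul (φ : F → F) :
    ∑ u, Equiv.swap (0 : F) 1 u * φ u = ∑ u, u * φ u + φ 0 - φ 1 := by
  have h : ∑ u, (Equiv.swap (0 : F) 1 u - u) * φ u = φ 0 - φ 1 := by
    rw [Fintype.sum_eq_add 0 1 zero_ne_one fun u hu => by
      rw [Equiv.swap_apply_of_ne_of_ne hu.1 hu.2, sub_self, zero_mul]]
    simp [sub_eq_add_neg]
  simp only [sub_mul, sum_sub_distrib] at h
  linear_combination h

theorem sum_swap_add_mul_inv (hq : 2 < Fintype.card F) (W : F) :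
    ∑ z, Equiv.swap (0 : F) 1 (W + z) * z⁻¹ = -1 - (W⁻¹ + (1 - W)⁻¹) := by
  have hshift : ∀ φ : F → F, ∑ z, φ (W + z) * z⁻¹ = ∑ u, φ u * (u - W)⁻¹ := fun φ =>
    Fintype.sum_equiv (Equiv.addLeft W) _ _ fun z => by simp
  have hid := hshift fun u => u
  rw [hshift, sum_swap_mul, ← hid, sum_congr rfl fun z _ => add_mul W z z⁻¹, sum_add_distrib,
    ← mul_sum, sum_mul_inv_self, sum_inv_eq_zero hq]
  ring

theorem sum_swap_swap_mul_inv (hq : 4 < Fintype.card F) :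
    ∑ x : F, ∑ y, ∑ z, Equiv.swap 0 1 (Equiv.swap 0 1 (x + y) + z) * (x⁻¹ * y⁻¹ * z⁻¹) = -6 := by
  have hz : ∀ x y : F, ∑ z, Equiv.swap 0 1 (Equiv.swap 0 1 (x + y) + z) * (x⁻¹ * y⁻¹ * z⁻¹)
      = x⁻¹ * y⁻¹ * (-1 - ((x + y)⁻¹ + (1 - (x + y))⁻¹)) := fun x y => by
    -- the inner `swap` disappears because `W⁻¹ + (1 - W)⁻¹` is invariant under it
    rw [← inv_swap_add_inv_one_sub_swap, ← sum_swap_add_mul_inv (by omega), mul_sum]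
    exact sum_congr rfl fun z _ => by ring
  simp_rw [hz]
  rw [sum_sum_inv_mul_inv_mul_add (by omega) fun s => -1 - (s⁻¹ + (1 - s)⁻¹)]
  have hexpand : ∀ s : F, -2 * s⁻¹ ^ 2 * (-1 - (s⁻¹ + (1 - s)⁻¹))
      = 2 * s⁻¹ ^ 2 + 2 * s⁻¹ ^ 3 + 2 * (s⁻¹ ^ 2 * (1 - s)⁻¹) := fun s => by ring
  rw [sum_congr rfl fun s _ => hexpand s, sum_add_distrib, sum_add_distrib, ← mul_sum, ← mul_sum,
    ← mul_sum, sum_inv_pow_eq_zero (by omega), sum_inv_pow_eq_zero (by omega),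
    sum_inv_sq_mul_inv_one_sub (by omega)]
  ring

theorem sum_threeVarLPP_mul_prod (hq : 4 < Fintype.card F) :
    ∑ v : Fin 3 → F, threeVarLPP v * ∏ i, v i = -6 := by
  rw [← (Equiv.piCongrRight fun _ => Equiv.inv F).sum_comp, sum_fin_three_arrow,
    ← sum_swap_swap_mul_inv hq]
  simp only [threeVarLPP, Equiv.piCongrRight_apply, Equiv.inv_apply, Pi.map_apply,
    Matrix.cons_val_zero, Matrix.cons_val_one, Matrix.cons_val, inv_inv, Fin.prod_univ_three]

end SwapZeroOne

theorem lpp_three_vars_variant_general {p r : ℕ} (hp : p.Prime) (hp2 : p ≠ 2) (hp3 : p ≠ 3)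
    (hr : 0 < r)
    {F : Type*} [Field F] [Fintype F]
    (hF : Fintype.card F = p ^ r)
    (t : Polynomial F)
    (ht : t = Polynomial.X + ∑ k ∈ Finset.range (Fintype.card F - 1), Polynomial.X ^ k)
    (f₂ : MvPolynomial (Fin 2) F)
    (heq₂ : ∀ x : Fin 2 → F, eval x f₂ =
      Polynomial.eval ((x 0) ^ (Fintype.card F - 2) + (x 1) ^ (Fintype.card F - 2)) t)
    (g : MvPolynomial (Fin 3) F)
    (hredg : ∀ i : Fin 3, g.degreeOf i < Fintype.card F)
    (heqg : ∀ x : Fin 3 → F, eval x g =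
      Polynomial.eval ((eval ![x 0, x 1] f₂) + (x 2) ^ (Fintype.card F - 2)) t) :
    g.totalDegree = 3 * (Fintype.card F - 2) := by
  classical
  have hq : 4 < Fintype.card F :=
    hF ▸ (hp.five_le_of_ne_two_of_ne_three hp2 hp3).trans (Nat.le_self_pow hr.ne' p)
  have h6 : (6 : F) ≠ 0 := by
    have : Fact p.Prime := ⟨hp⟩
    have := charP_of_card_eq_prime_pow (R := F) hF
    rw [show (6 : F) = ((2 * 3 : ℕ) : F) by norm_num, Ne, CharP.cast_eq_zero_iff F p,
      hp.dvd_mul, Nat.prime_dvd_prime_iff_eq hp Nat.prime_two,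
      Nat.prime_dvd_prime_iff_eq hp Nat.prime_three]
    exact fun h => h.elim hp2 hp3
  have hG : ∀ v, eval v g = threeVarLPP v := fun v => by
    rw [heqg, heq₂, ht, eval_X_add_sum_range_pow, eval_X_add_sum_range_pow]
    simp [pow_card_sub_two_eq_inv_s15 (by omega : 2 < Fintype.card F), threeVarLPP]
  have hlp : IsLocalPermutation fun v => eval v g := by
    simpa only [hG] using isLocalPermutation_threeVarLPP
  have hsum : ∑ v : Fin 3 → F, eval v g * ∏ i, v i ≠ 0 := by
    simpa only [hG, sum_threeVarLPP_mul_prod hq] using neg_ne_zero.mpr h6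
  simpa using hlp.totalDegree_eq (by omega) (by simp; omega) hredg hsum

/-- For `q = p^r > 3` with `p ≠ 2, 3` prime, `t(x) = x + ∑_{k=0}^{q-2} x^k` and `f₂` the
reduced form of `t(x₁^{q-2} + x₂^{q-2})`, the reduced form `g` of `t(f₂ + x₃^{q-2})`
has total degree `3(q-2)`. -/
theorem lpp_three_vars_variant {p r : ℕ} (hp : p.Prime) (hp2 : p ≠ 2) (hp3 : p ≠ 3)
    (hr : 0 < r)
    {F : Type*} [Field F] [Fintype F] [DecidableEq F]
    (hF : Fintype.card F = p ^ r) (hq : 3 < Fintype.card F)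
    (t : Polynomial F)
    (ht : t = Polynomial.X + ∑ k ∈ Finset.range (Fintype.card F - 1), Polynomial.X ^ k)
    (f₂ : MvPolynomial (Fin 2) F)
    (hred₂ : ∀ i : Fin 2, f₂.degreeOf i < Fintype.card F)
    (heq₂ : ∀ x : Fin 2 → F, eval x f₂ =
      Polynomial.eval ((x 0) ^ (Fintype.card F - 2) + (x 1) ^ (Fintype.card F - 2)) t)
    (g : MvPolynomial (Fin 3) F)
    (hredg : ∀ i : Fin 3, g.degreeOf i < Fintype.card F)
    (heqg : ∀ x : Fin 3 → F, eval x g =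
      Polynomial.eval ((eval ![x 0, x 1] f₂) + (x 2) ^ (Fintype.card F - 2)) t) :
    g.totalDegree = 3 * (Fintype.card F - 2) :=
  lpp_three_vars_variant_general hp hp2 hp3 hr hF t ht f₂ heq₂ g hredg heqg
end
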